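/- arXiv:1704.00424 — 12 statements merged into one kernel-verified Lean document; each statement's English description precedes it below -/
import Mathlib

section
/- Let S be a nonempty compact convex subset of [0,1]^n that contains both the all-zeros vector 0 and the all-ones vector 1. Then sup over (x,w) in the convex hull of G_S of |w − ∏_{j=1}^n x_j^{α_j}| equals C_d = (1 − 1/d)·d^{1/(1−d)}; in particular this equality holds for S = [0,1]^n. -/
/-!
On `[0,1]^n` the graph of `f = ∏ x_j ^ α_j` lies in the polyhedron
`max (0, 1 - ∑ α_j (1 - x_j)) ≤ w ≤ min {x_j | α_j ≠ 0}` (Bernoulli's inequality and its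
product form), hence so does its convex hull. There `w - f ≤ w - w ^ d ≤ max_t (t - t ^ d) = C_d`,
and by AM-GM `f ≤ σ ^ d` for the `α`-weighted mean `σ` of `x`, so that
`f - w ≤ σ ^ d - max (0, d (σ - (1 - 1/d))) ≤ (1 - 1/d) ^ d ≤ C_d`. The bound is attained on the
segment from `(0, 0)` to `(1, 1)` at `t = d ^ (1 / (1 - d))`, the maximiser of `t - t ^ d`.
-/

open Finset

theorem sub_pow_le_sub_pow_of_natCast_mul_pow_eq {t u : ℝ} {d : ℕ} (ht : 0 ≤ t) (hu : 0 < u)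
    (hdu : d * u ^ d = u) : t - t ^ d ≤ u - u ^ d := by
  -- Bernoulli at `t / u` is the tangent-line bound for `t ^ d` at `u`, where the slope is `1`.
  have bernoulli := one_add_mul_le_pow (show (-2 : ℝ) ≤ t / u - 1 by
    linarith [div_nonneg ht hu.le]) d
  rw [add_sub_cancel, div_pow] at bernoulli
  have hud : 0 < u ^ d := pow_pos hu d
  rw [le_div_iff₀ hud] at bernoulli
  have hslope : (d : ℝ) * (t / u - 1) * u ^ d = t - u := by
    rw [mul_comm (d : ℝ), mul_assoc, hdu]
    field_simp
  nlinarith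

theorem pow_sub_pow_le_natCast_mul_sub {a b : ℝ} (n : ℕ) (hb : 0 ≤ b) (hba : b ≤ a)
    (ha : a ≤ 1) : a ^ n - b ^ n ≤ n * (a - b) := by
  have hmax : max |a| |b| ^ (n - 1) ≤ 1 :=
    pow_le_one₀ (le_max_of_le_left (abs_nonneg a))
      (max_le (by rwa [abs_of_nonneg (hb.trans hba)]) (by rw [abs_of_nonneg hb]; linarith))
  calc a ^ n - b ^ n ≤ |a ^ n - b ^ n| := le_abs_self _
    _ ≤ |a - b| * n * max |a| |b| ^ (n - 1) := abs_pow_sub_pow_le a b n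
    _ ≤ |a - b| * n := mul_le_of_le_one_right (by positivity) hmax
    _ = n * (a - b) := by rw [abs_of_nonneg (sub_nonneg.2 hba), mul_comm]

theorem Finset.one_sub_sum_one_sub_le_prod {ι : Type*} (s : Finset ι) {q : ι → ℝ}
    (h0 : ∀ i ∈ s, 0 ≤ q i) (h1 : ∀ i ∈ s, q i ≤ 1) : 1 - ∑ i ∈ s, (1 - q i) ≤ ∏ i ∈ s, q i := by
  classical
  induction s using Finset.induction_on with
  | empty => simp
  | insert j s hj ih =>
    rw [sum_insert hj, prod_insert hj]
    have hs0 : ∀ i ∈ s, 0 ≤ q i := fun i hi => h0 i (mem_insert_of_mem hi)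
    have hP0 : 0 ≤ ∏ i ∈ s, q i := prod_nonneg hs0
    have hP1 : ∏ i ∈ s, q i ≤ 1 := prod_le_one hs0 fun i hi => h1 i (mem_insert_of_mem hi)
    have := ih hs0 fun i hi => h1 i (mem_insert_of_mem hi)
    have hqj := h1 j (mem_insert_self j s)
    nlinarith [h0 j (mem_insert_self j s)]

noncomputable def hullGapConstant (d : ℕ) : ℝ :=
  (1 - 1 / (d : ℝ)) * (d : ℝ) ^ ((1 : ℝ) / (1 - (d : ℝ)))

section HullGapConstant

variable {d : ℕ}

theorem natCast_rpow_one_div_one_sub_pow (hd : 1 < d) :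
    ((d : ℝ) ^ ((1 : ℝ) / (1 - d))) ^ d = (d : ℝ) ^ ((1 : ℝ) / (1 - d)) / d := by
  have hd' : (1 : ℝ) < d := by exact_mod_cast hd
  have hexp : (1 : ℝ) / (1 - d) * d = 1 / (1 - d) - 1 := by
    field_simp [show (1 : ℝ) - d ≠ 0 by linarith]
    ring
  rw [← Real.rpow_mul_natCast (by positivity), hexp, Real.rpow_sub_one (by positivity)]

theorem natCast_rpow_one_div_one_sub_mem_Icc (hd : 1 < d) :
    (d : ℝ) ^ ((1 : ℝ) / (1 - d)) ∈ Set.Icc 0 1 := by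
  have hd' : (1 : ℝ) < d := by exact_mod_cast hd
  exact ⟨by positivity, Real.rpow_le_one_of_one_le_of_nonpos hd'.le
    (div_nonpos_of_nonneg_of_nonpos zero_le_one (by linarith))⟩

theorem hullGapConstant_eq (hd : 1 < d) :
    hullGapConstant d = (d : ℝ) ^ ((1 : ℝ) / (1 - d)) - ((d : ℝ) ^ ((1 : ℝ) / (1 - d))) ^ d := by
  rw [hullGapConstant, natCast_rpow_one_div_one_sub_pow hd]
  ring

theorem sub_pow_le_hullGapConstant (hd : 1 < d) {t : ℝ} (ht : 0 ≤ t) :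
    t - t ^ d ≤ hullGapConstant d := by
  have hd' : (0 : ℝ) < d := by exact_mod_cast (zero_lt_one.trans hd)
  rw [hullGapConstant_eq hd]
  refine sub_pow_le_sub_pow_of_natCast_mul_pow_eq ht (by positivity) ?_
  rw [natCast_rpow_one_div_one_sub_pow hd]
  field_simp

theorem one_sub_inv_pow_le_hullGapConstant (hd : 1 < d) :
    (1 - 1 / (d : ℝ)) ^ d ≤ hullGapConstant d := by
  obtain ⟨m, rfl⟩ : ∃ m, d = m + 1 := Nat.exists_eq_add_one.2 (zero_lt_one.trans hd)
  have hm : (0 : ℝ) < m := by exact_mod_cast Nat.succ_lt_succ_iff.1 hd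
  set a : ℝ := 1 - 1 / ((m + 1 : ℕ) : ℝ)
  have ha : a * (1 + 1 / m) = 1 := by
    simp only [a]; push_cast; field_simp; ring
  have hbern : 2 ≤ (1 + 1 / (m : ℝ)) ^ m := by
    have := one_add_mul_le_pow (show (-2 : ℝ) ≤ 1 / m by linarith [one_div_pos.2 hm]) m
    rwa [mul_one_div_cancel hm.ne', one_add_one_eq_two] at this
  have ha0 : 0 ≤ a := by
    simp only [a]; push_cast; rw [sub_nonneg, div_le_one (by positivity)]; linarith
  have ham : 2 * a ^ m ≤ 1 := by
    calc 2 * a ^ m ≤ (1 + 1 / (m : ℝ)) ^ m * a ^ m := by gcongr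
      _ = 1 := by rw [← mul_pow, mul_comm, ha, one_pow]
  calc a ^ (m + 1) ≤ a - a ^ (m + 1) := by rw [pow_succ]; nlinarith
    _ ≤ hullGapConstant (m + 1) := sub_pow_le_hullGapConstant hd ha0

end HullGapConstant

variable {ι : Type*} [Fintype ι]

theorem one_sub_sum_mul_one_sub_le_prod_pow (α : ι → ℕ) {x : ι → ℝ} (hx : x ∈ Set.Icc 0 1) :
    1 - ∑ j, (α j : ℝ) * (1 - x j) ≤ ∏ j, x j ^ α j := by
  refine le_trans ?_ (one_sub_sum_one_sub_le_prod univ (fun j _ => pow_nonneg (hx.1 j) _)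
    fun j _ => pow_le_one₀ (hx.1 j) (hx.2 j))
  gcongr with j
  have hxj : 0 ≤ x j := hx.1 j
  have := one_add_mul_le_pow (show (-2 : ℝ) ≤ x j - 1 by linarith) (α j)
  rw [add_sub_cancel] at this
  linarith

theorem prod_pow_le_of_ne_zero (α : ι → ℕ) {x : ι → ℝ} (hx : x ∈ Set.Icc 0 1) {j : ι}
    (hj : α j ≠ 0) : ∏ i, x i ^ α i ≤ x j := by
  classical
  rw [← mul_prod_erase univ _ (mem_univ j)]
  calc x j ^ α j * ∏ i ∈ univ.erase j, x i ^ α i ≤ x j ^ α j * 1 := by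
        gcongr
        · exact pow_nonneg (hx.1 j) _
        · exact prod_le_one (fun i _ => pow_nonneg (hx.1 i) _)
            fun i _ => pow_le_one₀ (hx.1 i) (hx.2 i)
    _ ≤ x j := by rw [mul_one]; exact pow_le_of_le_one (hx.1 j) (hx.2 j) hj

theorem prod_pow_le_weighted_mean_pow (α : ι → ℕ) {x : ι → ℝ} (hx : ∀ j, 0 ≤ x j)
    (hα : ∑ j, α j ≠ 0) :
    ∏ j, x j ^ α j ≤ ((∑ j, (α j : ℝ) * x j) / ∑ j, (α j : ℝ)) ^ ∑ j, α j := by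
  have hsum : (0 : ℝ) < ∑ j, (α j : ℝ) := by exact_mod_cast Nat.pos_of_ne_zero hα
  have amgm := Real.geom_mean_le_arith_mean univ (fun j => (α j : ℝ)) x
    (fun j _ => Nat.cast_nonneg _) hsum fun j _ => hx j
  have hP : 0 ≤ ∏ j, x j ^ (α j : ℝ) := prod_nonneg fun j _ => Real.rpow_nonneg (hx j) _
  simp only [Real.rpow_natCast, ← Nat.cast_sum] at amgm hP
  calc ∏ j, x j ^ α j = ((∏ j, x j ^ α j) ^ ((∑ j, α j : ℕ) : ℝ)⁻¹) ^ ∑ j, α j :=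
        (Real.rpow_inv_natCast_pow hP hα).symm
    _ ≤ _ := by push_cast at amgm ⊢; gcongr

def monomialRelaxation (α : ι → ℕ) : Set ((ι → ℝ) × ℝ) :=
  {p | p.1 ∈ Set.Icc 0 1 ∧ 0 ≤ p.2 ∧ (∀ j, α j ≠ 0 → p.2 ≤ p.1 j) ∧
    1 - ∑ j, (α j : ℝ) * (1 - p.1 j) ≤ p.2}

theorem convex_monomialRelaxation (α : ι → ℕ) : Convex ℝ (monomialRelaxation α) := by
  rintro ⟨x, w⟩ ⟨hx, hw, hwx, hlow⟩ ⟨y, v⟩ ⟨hy, hv, hvy, hlow'⟩ a b ha hb hab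
  simp only [monomialRelaxation, Set.mem_ofPred_eq, Prod.smul_mk, Prod.mk_add_mk, smul_eq_mul]
  refine ⟨convex_Icc 0 1 hx hy ha hb hab, by positivity, fun j hj => ?_, ?_⟩
  · simp only [Pi.add_apply, Pi.smul_apply, smul_eq_mul]
    gcongr
    exacts [hwx j hj, hvy j hj]
  · have hsum : 1 - ∑ j, (α j : ℝ) * (1 - (a • x + b • y) j)
        = a * (1 - ∑ j, (α j : ℝ) * (1 - x j)) + b * (1 - ∑ j, (α j : ℝ) * (1 - y j)) := by
      simp only [Pi.add_apply, Pi.smul_apply, smul_eq_mul, mul_sub, mul_one, sum_sub_distrib,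
        mul_add, sum_add_distrib, mul_left_comm _ a, mul_left_comm _ b, ← mul_sum]
      linear_combination (∑ j, (α j : ℝ) - 1) * hab
    rw [hsum]
    gcongr

theorem graph_subset_monomialRelaxation (α : ι → ℕ) {S : Set (ι → ℝ)} (hS : S ⊆ Set.Icc 0 1) :
    {p : (ι → ℝ) × ℝ | p.1 ∈ S ∧ p.2 = ∏ j, p.1 j ^ α j} ⊆ monomialRelaxation α := by
  rintro ⟨x, w⟩ ⟨hxS, hw : w = ∏ j, x j ^ α j⟩
  have hx := hS hxS
  subst hw
  exact ⟨hx, prod_nonneg fun j _ => pow_nonneg (hx.1 j) _,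
    fun j hj => prod_pow_le_of_ne_zero α hx hj, one_sub_sum_mul_one_sub_le_prod_pow α hx⟩

section MonomialRelaxation

variable {α : ι → ℕ} {p : (ι → ℝ) × ℝ}

theorem sub_prod_pow_le_of_mem_monomialRelaxation (hα : 1 < ∑ j, α j)
    (hp : p ∈ monomialRelaxation α) : p.2 - ∏ j, p.1 j ^ α j ≤ hullGapConstant (∑ j, α j) := by
  obtain ⟨hx, hw, hwx, -⟩ := hp
  have hpow : p.2 ^ ∑ j, α j ≤ ∏ j, p.1 j ^ α j := by
    rw [← prod_pow_eq_pow_sum]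
    refine prod_le_prod (fun j _ => pow_nonneg hw _) fun j _ => ?_
    rcases eq_or_ne (α j) 0 with hj | hj
    · simp [hj]
    · exact pow_le_pow_left₀ hw (hwx j hj) _
  linarith [sub_pow_le_hullGapConstant hα hw]

theorem prod_pow_sub_le_of_mem_monomialRelaxation (hα : ∑ j, α j ≠ 0)
    (hp : p ∈ monomialRelaxation α) :
    ∏ j, p.1 j ^ α j - p.2 ≤ (1 - 1 / ((∑ j, α j : ℕ) : ℝ)) ^ ∑ j, α j := by
  obtain ⟨hx, hw, -, hlow⟩ := hp
  set d := ∑ j, α j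
  have hD : (d : ℝ) = ∑ j, (α j : ℝ) := Nat.cast_sum _ _
  have hD0 : (0 : ℝ) < d := by exact_mod_cast Nat.pos_of_ne_zero hα
  set σ := (∑ j, (α j : ℝ) * p.1 j) / d
  set a := 1 - 1 / (d : ℝ)
  have hamgm : ∏ j, p.1 j ^ α j ≤ σ ^ d := by
    have := prod_pow_le_weighted_mean_pow α hx.1 hα
    rwa [← hD] at this
  have hσ0 : 0 ≤ σ := div_nonneg (sum_nonneg fun j _ => mul_nonneg (by positivity) (hx.1 j)) hD0.le
  have hσ1 : σ ≤ 1 := by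
    rw [div_le_one hD0, hD]
    exact sum_le_sum fun j _ => mul_le_of_le_one_right (by positivity) (hx.2 j)
  have hlow' : d * (σ - a) ≤ p.2 := by
    convert hlow using 1
    simp only [σ, a, mul_sub, mul_one, sum_sub_distrib, ← hD]
    field_simp
    ring
  rcases le_or_gt σ a with hσa | haσ
  · have : σ ^ d ≤ a ^ d := pow_le_pow_left₀ hσ0 hσa d
    linarith
  · have ha0 : 0 ≤ a := by
      rw [sub_nonneg, div_le_one hD0]
      exact_mod_cast Nat.one_le_iff_ne_zero.2 hα
    have := pow_sub_pow_le_natCast_mul_sub d ha0 haσ.le hσ1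
    linarith

theorem abs_sub_prod_pow_le_of_mem_monomialRelaxation (hα : 1 < ∑ j, α j) (hp : p ∈ monomialRelaxation α) :
    |p.2 - ∏ j, p.1 j ^ α j| ≤ hullGapConstant (∑ j, α j) := by
  rw [abs_le, neg_le, neg_sub]
  exact ⟨(prod_pow_sub_le_of_mem_monomialRelaxation (by omega) hp).trans
      (one_sub_inv_pow_le_hullGapConstant hα),
    sub_prod_pow_le_of_mem_monomialRelaxation hα hp⟩

end MonomialRelaxation

theorem isGreatest_abs_sub_prod_pow_convexHull_graph (α : ι → ℕ) (hα : 1 < ∑ j, α j)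
    {S : Set (ι → ℝ)} (hS : S ⊆ Set.Icc 0 1) (h0 : 0 ∈ S) (h1 : 1 ∈ S) :
    IsGreatest ((fun p : (ι → ℝ) × ℝ => |p.2 - ∏ j, p.1 j ^ α j|) ''
        convexHull ℝ {p : (ι → ℝ) × ℝ | p.1 ∈ S ∧ p.2 = ∏ j, p.1 j ^ α j})
      (hullGapConstant (∑ j, α j)) := by
  set G := {p : (ι → ℝ) × ℝ | p.1 ∈ S ∧ p.2 = ∏ j, p.1 j ^ α j}
  set d := ∑ j, α j
  have hdiag (t : ℝ) : ∏ j, (t • (1 : ι → ℝ)) j ^ α j = t ^ d := by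
    simp [prod_pow_eq_pow_sum, d]
  refine ⟨?_, ?_⟩
  · set u := (d : ℝ) ^ ((1 : ℝ) / (1 - d))
    have hu := natCast_rpow_one_div_one_sub_mem_Icc hα
    have hG0 : (0 : (ι → ℝ) × ℝ) ∈ G := ⟨h0, by
      simp only [Prod.fst_zero, Prod.snd_zero, Pi.zero_apply]
      rw [prod_pow_eq_pow_sum, zero_pow (by omega)]⟩
    have hG1 : ((1 : ι → ℝ), (1 : ℝ)) ∈ G := ⟨h1, by simp⟩
    refine ⟨u • ((1 : ι → ℝ), (1 : ℝ)), (convex_convexHull ℝ G).smul_mem_of_zero_mem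
      (subset_convexHull ℝ G hG0) (subset_convexHull ℝ G hG1) hu, ?_⟩
    have hud : u ^ d ≤ u := by
      rw [natCast_rpow_one_div_one_sub_pow hα]
      exact div_le_self hu.1 (by exact_mod_cast hα.le)
    simp only [Prod.smul_mk, smul_eq_mul, mul_one, hdiag]
    rw [abs_of_nonneg (sub_nonneg.2 hud), hullGapConstant_eq hα]
  · rintro _ ⟨p, hp, rfl⟩
    exact abs_sub_prod_pow_le_of_mem_monomialRelaxation hα
      (convexHull_min (graph_subset_monomialRelaxation α hS) (convex_monomialRelaxation α) hp)

theorem stmt1_general (n : ℕ) (α : Fin n → ℕ)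
    (d : ℕ) (hd : d = ∑ j, α j) (hd2 : 2 ≤ d)
    (S : Set (Fin n → ℝ)) (hSsub : S ⊆ Set.Icc 0 1)
    (h0 : (0 : Fin n → ℝ) ∈ S) (h1 : (1 : Fin n → ℝ) ∈ S) :
    sSup ((fun p : (Fin n → ℝ) × ℝ => |p.2 - ∏ j, p.1 j ^ α j|) ''
        convexHull ℝ {p : (Fin n → ℝ) × ℝ | p.1 ∈ S ∧ p.2 = ∏ j, p.1 j ^ α j})
      = (1 - 1 / (d : ℝ)) * (d : ℝ) ^ ((1 : ℝ) / (1 - (d : ℝ))) ∧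
    sSup ((fun p : (Fin n → ℝ) × ℝ => |p.2 - ∏ j, p.1 j ^ α j|) ''
        convexHull ℝ {p : (Fin n → ℝ) × ℝ |
          p.1 ∈ Set.Icc (0 : Fin n → ℝ) 1 ∧ p.2 = ∏ j, p.1 j ^ α j})
      = (1 - 1 / (d : ℝ)) * (d : ℝ) ^ ((1 : ℝ) / (1 - (d : ℝ))) := by
  subst hd
  exact ⟨(isGreatest_abs_sub_prod_pow_convexHull_graph α hd2 hSsub h0 h1).csSup_eq,
    (isGreatest_abs_sub_prod_pow_convexHull_graph α hd2 subset_rfl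
      (Set.left_mem_Icc.2 zero_le_one) (Set.right_mem_Icc.2 zero_le_one)).csSup_eq⟩

/-- If `0, 1 ∈ S`, the convex hull error of the monomial over `S ⊆ [0,1]^n` equals `C_d`;
in particular this holds for `S = [0,1]^n`. -/
theorem stmt1 (n : ℕ) (hn : 1 ≤ n) (α : Fin n → ℕ) (hα : ∀ j, 1 ≤ α j)
    (d : ℕ) (hd : d = ∑ j, α j) (hd2 : 2 ≤ d)
    (S : Set (Fin n → ℝ)) (hS : S.Nonempty) (hScompact : IsCompact S)
    (hSconvex : Convex ℝ S) (hSsub : S ⊆ Set.Icc 0 1)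
    (h0 : (0 : Fin n → ℝ) ∈ S) (h1 : (1 : Fin n → ℝ) ∈ S) :
    sSup ((fun p : (Fin n → ℝ) × ℝ => |p.2 - ∏ j, p.1 j ^ α j|) ''
        convexHull ℝ {p : (Fin n → ℝ) × ℝ | p.1 ∈ S ∧ p.2 = ∏ j, p.1 j ^ α j})
      = (1 - 1 / (d : ℝ)) * (d : ℝ) ^ ((1 : ℝ) / (1 - (d : ℝ))) ∧
    sSup ((fun p : (Fin n → ℝ) × ℝ => |p.2 - ∏ j, p.1 j ^ α j|) ''
        convexHull ℝ {p : (Fin n → ℝ) × ℝ |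
          p.1 ∈ Set.Icc (0 : Fin n → ℝ) 1 ∧ p.2 = ∏ j, p.1 j ^ α j})
      = (1 - 1 / (d : ℝ)) * (d : ℝ) ^ ((1 : ℝ) / (1 - (d : ℝ))) :=
  stmt1_general n α d hd hd2 S hSsub h0 h1
end

section
/- Let S be a nonempty compact convex subset of [0,1]^n, let p(x) = Σ_α c_α ∏_j x_j^{α_j} be a real multivariate polynomial in n variables with total degree at most m, where m ≥ 2 is an integer. Let z_S = inf_{x ∈ S} p(x), and let z_mon = inf { Σ_{α ∈ supp(p)} c_α w_α : x ∈ S and (x, w_α) lies in the convex hull of G_S^α for every α in the support of p }. Then z_S − z_mon ≤ (max_{α ∈ supp(p)} |c_α|) · (1 − 1/m) · m^{1/(1−m)} · binom(n+m, n). -/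
/-!
Write `x^α` for the monomial and `d = |α| ≤ m`. On the cube, `w = x^α` satisfies the linear
inequalities `0 ≤ w ≤ 1`, `w ≤ x_j` for `α_j ≠ 0`, and `w ≥ ∑ α_j x_j - (d - 1)` (Weierstrass's
product inequality), so they hold on the convex hull of the graph as well. Together with AM–GM,
`x^α ≤ (∑ α_j x_j / d)^d`, they give `x^α - w ≤ (1 - 1/d)^d` and `w - x^α ≤ w - w^m`, and both
are at most `D_m = max_{t ≥ 0} (t - t^m) = (1 - 1/m) m^(1/(1-m))`. Summing `|c_α| |x^α - w_α|`
over the at most `binom(n+m, n)` exponents of `p` gives the bound.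
-/

open Finset

/-- `max_{t ≥ 0} (t - t ^ m)`, attained at `t = m ^ (1 / (1 - m))`. -/
noncomputable def powGap (m : ℕ) : ℝ := (1 - 1 / (m : ℝ)) * (m : ℝ) ^ ((1 : ℝ) / (1 - (m : ℝ)))

lemma pow_add_mul_sub_le_pow {x y : ℝ} (hx : 0 ≤ x) (hy : 0 ≤ y) (n : ℕ) :
    x ^ n + n * x ^ (n - 1) * (y - x) ≤ y ^ n := by
  simpa using pow_add_mul_le_add_pow hx (by linarith : 0 ≤ 2 * x + (y - x)) n

lemma natCast_rpow_one_div_one_sub_pow_sub_one {m : ℕ} (hm : 1 < m) :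
    ((m : ℝ) ^ ((1 : ℝ) / (1 - (m : ℝ)))) ^ (m - 1) = 1 / m := by
  have hm' : (1 : ℝ) - m ≠ 0 := by
    have : (1 : ℝ) < m := by exact_mod_cast hm
    linarith
  rw [← Real.rpow_natCast, ← Real.rpow_mul (Nat.cast_nonneg m), Nat.cast_sub hm.le, Nat.cast_one,
    show (1 : ℝ) / (1 - m) * (m - 1) = -1 by field_simp; ring, Real.rpow_neg_one, one_div]

lemma powGap_eq_sub_pow {m : ℕ} (hm : 1 < m) :
    powGap m = (m : ℝ) ^ ((1 : ℝ) / (1 - (m : ℝ))) - ((m : ℝ) ^ ((1 : ℝ) / (1 - (m : ℝ)))) ^ m := by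
  rw [powGap, ← pow_sub_one_mul (by omega : m ≠ 0), natCast_rpow_one_div_one_sub_pow_sub_one hm]
  ring

lemma sub_pow_le_powGap {m : ℕ} (hm : 1 < m) {t : ℝ} (ht : 0 ≤ t) : t - t ^ m ≤ powGap m := by
  rw [powGap_eq_sub_pow hm]
  set u : ℝ := (m : ℝ) ^ ((1 : ℝ) / (1 - (m : ℝ)))
  have hslope : (m : ℝ) * u ^ (m - 1) = 1 := by
    rw [natCast_rpow_one_div_one_sub_pow_sub_one hm]; field_simp
  have htangent := pow_add_mul_sub_le_pow (by positivity : 0 ≤ u) ht m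
  rw [hslope, one_mul] at htangent
  linarith

lemma powGap_nonneg {m : ℕ} (hm : 1 < m) : 0 ≤ powGap m := by
  simpa [zero_pow (by omega : m ≠ 0)] using sub_pow_le_powGap hm le_rfl

lemma one_sub_inv_pow_le_powGap {d m : ℕ} (hd : 1 ≤ d) (hdm : d ≤ m) (hm : 1 < m) :
    (1 - 1 / d : ℝ) ^ d ≤ powGap m := by
  set c : ℝ := 1 - 1 / d
  have hd' : (1 : ℝ) ≤ d := by exact_mod_cast hd
  have hc0 : 0 ≤ c := by simp only [c, sub_nonneg]; exact div_le_one_of_le₀ hd' (by positivity)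
  have hc1 : c ≤ 1 := by simp only [c]; linarith [show 0 ≤ 1 / (d : ℝ) by positivity]
  have htwice : 2 * c ^ d ≤ c := by
    obtain ⟨k, rfl⟩ := Nat.exists_eq_add_of_le' hd
    rcases Nat.eq_zero_or_pos k with rfl | hk
    · simp [c]
    have hk' : (0 : ℝ) < k := by exact_mod_cast hk
    have hbern := one_add_mul_le_pow (a := (1 / k : ℝ)) (by linarith [one_div_pos.2 hk']) k
    rw [mul_one_div_cancel hk'.ne'] at hbern
    have hinv : c * (1 + 1 / k) = 1 := by simp only [c]; push_cast; field_simp; ring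
    have : c ^ k * (1 + 1 / k : ℝ) ^ k = 1 := by rw [← mul_pow, hinv, one_pow]
    rw [pow_succ]
    nlinarith [pow_nonneg hc0 k]
  have hmono : c ^ m ≤ c ^ d := pow_le_pow_of_le_one hc0 hc1 hdm
  linarith [sub_pow_le_powGap hm hc0]

lemma pow_sub_le_one_sub_inv_pow {d : ℕ} (hd : 1 ≤ d) {s w : ℝ} (hs0 : 0 ≤ s) (hs1 : s ≤ 1)
    (hw0 : 0 ≤ w) (hw : d * s - (d - 1) ≤ w) : s ^ d - w ≤ (1 - 1 / d : ℝ) ^ d := by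
  set c : ℝ := 1 - 1 / d
  have hd' : (1 : ℝ) ≤ d := by exact_mod_cast hd
  have hc0 : 0 ≤ c := by simp only [c, sub_nonneg]; exact div_le_one_of_le₀ hd' (by positivity)
  have hdc : d * c = d - 1 := by simp only [c]; field_simp
  rcases le_total s c with hsc | hcs
  · linarith [pow_le_pow_left₀ hs0 hsc d]
  · have htangent := pow_add_mul_sub_le_pow hs0 hc0 d
    have hsd : s ^ (d - 1) ≤ 1 := pow_le_one₀ hs0 hs1
    nlinarith [mul_le_mul_of_nonneg_left hsd (by positivity : (0 : ℝ) ≤ d * (s - c))]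

lemma one_sub_sum_mul_le_prod_pow {ι : Type*} (s : Finset ι) (a : ι → ℕ) {x : ι → ℝ}
    (hx0 : ∀ i ∈ s, 0 ≤ x i) (hx1 : ∀ i ∈ s, x i ≤ 1) :
    1 - ∑ i ∈ s, a i * (1 - x i) ≤ ∏ i ∈ s, x i ^ a i := by
  induction s using Finset.cons_induction with
  | empty => simp
  | cons i s his ih =>
    simp only [Finset.mem_cons, forall_eq_or_imp] at hx0 hx1
    rw [prod_cons, sum_cons]
    have hbern : 1 + a i * (x i - 1) ≤ x i ^ a i := by
      simpa using one_add_mul_le_pow (a := x i - 1) (by linarith [hx0.1]) (a i)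
    have hrest : 0 ≤ ∑ j ∈ s, a j * (1 - x j) :=
      sum_nonneg fun j hj => mul_nonneg (Nat.cast_nonneg _) (by linarith [hx1.2 j hj])
    have hpow1 : x i ^ a i ≤ 1 := pow_le_one₀ hx0.1 hx1.1
    nlinarith [ih hx0.2 hx1.2, pow_nonneg hx0.1 (a i)]

lemma prod_pow_le_pow_sum_mul_div {ι : Type*} (s : Finset ι) (a : ι → ℕ) {x : ι → ℝ}
    (hx : ∀ i ∈ s, 0 ≤ x i) :
    ∏ i ∈ s, x i ^ a i ≤ ((∑ i ∈ s, a i * x i) / (∑ i ∈ s, a i : ℕ)) ^ (∑ i ∈ s, a i) := by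
  set d := ∑ i ∈ s, a i
  rcases Nat.eq_zero_or_pos d with hd | hd
  · rw [hd, pow_zero]
    exact (prod_eq_one fun i hi => by rw [sum_eq_zero_iff.1 hd i hi, pow_zero]).le
  have hd' : (0 : ℝ) < d := by exact_mod_cast hd
  have hamgm := Real.geom_mean_le_arith_mean s (fun i => (a i : ℝ)) x (fun i _ => by positivity)
    (by exact_mod_cast hd) hx
  simp only [Real.rpow_natCast, ← Nat.cast_sum] at hamgm
  calc ∏ i ∈ s, x i ^ a i = ((∏ i ∈ s, x i ^ a i) ^ (d : ℝ)⁻¹) ^ d := by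
        rw [← Real.rpow_natCast, ← Real.rpow_mul (prod_nonneg fun i hi => pow_nonneg (hx i hi) _),
          inv_mul_cancel₀ hd'.ne', Real.rpow_one]
    _ ≤ _ := pow_le_pow_left₀
          (Real.rpow_nonneg (prod_nonneg fun i hi => pow_nonneg (hx i hi) _) _) hamgm d

lemma le_of_mem_convexHull_graphOn {E : Type*} [AddCommGroup E] [Module ℝ E] {S : Set E}
    {f : E → ℝ} (ℓ : E →ₗ[ℝ] ℝ) (β r : ℝ) (h : ∀ y ∈ S, ℓ y + β * f y ≤ r) {x : E} {w : ℝ}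
    (hxw : (x, w) ∈ convexHull ℝ (S.graphOn f)) : ℓ x + β * w ≤ r := by
  have hlin : IsLinearMap ℝ fun q : E × ℝ => ℓ q.1 + β * q.2 :=
    ⟨fun q q' => by simp only [Prod.fst_add, Prod.snd_add, map_add]; ring,
      fun c q => by simp only [Prod.smul_fst, Prod.smul_snd, map_smul, smul_eq_mul]; ring⟩
  refine convexHull_min ?_ (convex_halfSpace_le hlin r) hxw
  rintro _ ⟨y, hy, rfl⟩
  exact h y hy

section Monomial

variable {ι : Type*} [Fintype ι] {a : ι → ℕ} {m : ℕ}

lemma prod_pow_le_of_ne_zero_s2 {y : ι → ℝ} (hy : y ∈ Set.Icc 0 1) {j : ι} (hj : a j ≠ 0) :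
    ∏ k, y k ^ a k ≤ y j := by
  classical
  calc ∏ k, y k ^ a k = y j ^ a j * ∏ k ∈ univ.erase j, y k ^ a k :=
        (mul_prod_erase univ _ (mem_univ j)).symm
    _ ≤ y j ^ a j := mul_le_of_le_one_right (pow_nonneg (hy.1 j) _)
        (prod_le_one (fun k _ => pow_nonneg (hy.1 k) _) fun k _ => pow_le_one₀ (hy.1 k) (hy.2 k))
    _ ≤ y j := pow_le_of_le_one (hy.1 j) (hy.2 j) hj

lemma prod_pow_sub_le_powGap (hm : 1 < m) (hdeg : ∑ j, a j ≤ m) {x : ι → ℝ}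
    (hx : x ∈ Set.Icc 0 1) {w : ℝ} (hw0 : 0 ≤ w)
    (hw : ∑ j, a j * x j - ((∑ j, a j : ℕ) - 1) ≤ w) :
    ∏ j, x j ^ a j - w ≤ powGap m := by
  have hamgm := prod_pow_le_pow_sum_mul_div univ a fun j _ => hx.1 j
  set d := ∑ j, a j
  rcases Nat.eq_zero_or_pos d with hd | hd
  · have hsum : ∑ j, (a j : ℝ) * x j = 0 :=
      sum_eq_zero fun j hj => by rw [sum_eq_zero_iff.1 hd j hj, Nat.cast_zero, zero_mul]
    rw [hd, pow_zero] at hamgm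
    rw [hsum, hd, Nat.cast_zero] at hw
    linarith [powGap_nonneg hm]
  have hd' : (0 : ℝ) < d := by exact_mod_cast hd
  set σ := (∑ j, (a j : ℝ) * x j) / d
  have hσ0 : 0 ≤ σ :=
    div_nonneg (sum_nonneg fun j _ => mul_nonneg (Nat.cast_nonneg _) (hx.1 j)) hd'.le
  have hσ1 : σ ≤ 1 := by
    refine div_le_one_of_le₀ ?_ hd'.le
    push_cast [d]
    exact sum_le_sum fun j _ => mul_le_of_le_one_right (Nat.cast_nonneg _) (hx.2 j)
  have hdσ : d * σ = ∑ j, (a j : ℝ) * x j := mul_div_cancel₀ _ hd'.ne'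
  calc ∏ j, x j ^ a j - w ≤ σ ^ d - w := by linarith
    _ ≤ (1 - 1 / d : ℝ) ^ d := pow_sub_le_one_sub_inv_pow hd hσ0 hσ1 hw0 (by rwa [hdσ])
    _ ≤ powGap m := one_sub_inv_pow_le_powGap hd hdeg hm

lemma sub_prod_pow_le_powGap (hm : 1 < m) (hdeg : ∑ j, a j ≤ m) {x : ι → ℝ} {w : ℝ}
    (hw0 : 0 ≤ w) (hw1 : w ≤ 1) (hwx : ∀ j, a j ≠ 0 → w ≤ x j) :
    w - ∏ j, x j ^ a j ≤ powGap m := by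
  have hprod : w ^ (∑ j, a j) ≤ ∏ j, x j ^ a j := by
    rw [← prod_pow_eq_pow_sum]
    refine prod_le_prod (fun j _ => pow_nonneg hw0 _) fun j _ => ?_
    rcases eq_or_ne (a j) 0 with h | h
    · simp [h]
    · exact pow_le_pow_left₀ hw0 (hwx j h) _
  linarith [pow_le_pow_of_le_one hw0 hw1 hdeg, sub_pow_le_powGap hm hw0]

lemma abs_prod_pow_sub_le_powGap_of_mem_convexHull (hm : 1 < m) (hdeg : ∑ j, a j ≤ m)
    {S : Set (ι → ℝ)} (hS : S ⊆ Set.Icc 0 1) {x : ι → ℝ} {w : ℝ}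
    (hxw : (x, w) ∈ convexHull ℝ (S.graphOn fun y => ∏ j, y j ^ a j)) :
    |∏ j, x j ^ a j - w| ≤ powGap m := by
  have hx : x ∈ Set.Icc 0 1 := by
    refine (convexHull_min ?_ ((convex_Icc 0 1).prod convex_univ) hxw).1
    rintro _ ⟨y, hy, rfl⟩
    exact ⟨hS hy, trivial⟩
  have hf (y : ι → ℝ) (hy : y ∈ S) : 0 ≤ ∏ j, y j ^ a j ∧ ∏ j, y j ^ a j ≤ 1 :=
    ⟨prod_nonneg fun j _ => pow_nonneg ((hS hy).1 j) _,
      prod_le_one (fun j _ => pow_nonneg ((hS hy).1 j) _)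
        fun j _ => pow_le_one₀ ((hS hy).1 j) ((hS hy).2 j)⟩
  have hw0 : 0 ≤ w := by
    simpa using le_of_mem_convexHull_graphOn 0 (-1) 0 (fun y hy => by simpa using (hf y hy).1) hxw
  have hw1 : w ≤ 1 := by
    simpa using le_of_mem_convexHull_graphOn 0 1 1 (fun y hy => by simpa using (hf y hy).2) hxw
  have hwx (j : ι) (hj : a j ≠ 0) : w ≤ x j := by
    have := le_of_mem_convexHull_graphOn (-LinearMap.proj j) 1 0
      (fun y hy => by simpa using prod_pow_le_of_ne_zero_s2 (hS hy) hj) hxw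
    simp only [LinearMap.neg_apply, LinearMap.coe_proj, Function.eval, one_mul] at this
    linarith
  have hweier (y : ι → ℝ) (hy : y ∈ S) :
      ∑ j, a j * y j - ((∑ j, a j : ℕ) - 1) ≤ ∏ j, y j ^ a j := by
    have := one_sub_sum_mul_le_prod_pow univ a (fun j _ => (hS hy).1 j) fun j _ => (hS hy).2 j
    simp only [mul_sub, mul_one, sum_sub_distrib, Nat.cast_sum] at this ⊢
    linarith
  set ℓ : (ι → ℝ) →ₗ[ℝ] ℝ := ∑ j, (a j : ℝ) • LinearMap.proj j
  have hℓ (y : ι → ℝ) : ℓ y = ∑ j, a j * y j := by simp [ℓ]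
  have hwL : ∑ j, a j * x j - ((∑ j, a j : ℕ) - 1) ≤ w := by
    have := le_of_mem_convexHull_graphOn ℓ (-1) ((∑ j, a j : ℕ) - 1)
      (fun y hy => by linarith [hℓ y, hweier y hy]) hxw
    linarith [hℓ x]
  exact abs_le.2 ⟨by linarith [sub_prod_pow_le_powGap hm hdeg hw0 hw1 hwx],
    prod_pow_sub_le_powGap hm hdeg hx hw0 hwL⟩

end Monomial

namespace MvPolynomial

lemma sum_le_totalDegree {σ R : Type*} [Fintype σ] [CommSemiring R] {p : MvPolynomial σ R}
    {a : σ →₀ ℕ} (ha : a ∈ p.support) : ∑ i, a i ≤ p.totalDegree := by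
  simpa [Finsupp.sum_fintype] using le_totalDegree ha

lemma card_support_le_choose {R : Type*} [CommSemiring R] {n m : ℕ} (p : MvPolynomial (Fin n) R)
    (hp : p.totalDegree ≤ m) : #p.support ≤ (n + m).choose n := by
  classical
  have hdeg (a : Fin n →₀ ℕ) (ha : a ∈ p.support) : ∑ i, a i ≤ m :=
    (sum_le_totalDegree ha).trans hp
  -- homogenize: a slack coordinate `m - |a|` makes every exponent of degree exactly `m`
  calc #p.support ≤ #((univ : Finset (Fin (n + 1))).finsuppAntidiag m) := by
        refine card_le_card_of_injOn (fun a => Finsupp.cons (m - ∑ i, a i) a) (fun a ha => ?_)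
          fun a _ b _ h => (Finsupp.cons_injective2 h).2
        simp [Fin.sum_univ_succ, Nat.sub_add_cancel (hdeg a ha)]
    _ = (n + m).choose n := by
        rw [card_finsuppAntidiag_nat_eq_choose, card_univ, Fintype.card_fin,
          Nat.add_right_comm, Nat.add_sub_cancel, Nat.choose_symm_add]

lemma eval_sub_sum_coeff_mul_le {σ : Type*} [Fintype σ] (p : MvPolynomial σ ℝ)
    (hp : p.support.Nonempty) (x : σ → ℝ) (w : (σ →₀ ℕ) → ℝ) {D : ℝ}
    (h : ∀ a ∈ p.support, |∏ i, x i ^ a i - w a| ≤ D) :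
    eval x p - ∑ a ∈ p.support, p.coeff a * w a ≤
      (p.support.sup' hp fun a => |p.coeff a|) * D * #p.support := by
  rw [eval_eq', ← sum_sub_distrib, mul_comm, ← nsmul_eq_mul, ← sum_const]
  refine sum_le_sum fun a ha => ?_
  calc p.coeff a * ∏ i, x i ^ a i - p.coeff a * w a
      ≤ |p.coeff a| * |∏ i, x i ^ a i - w a| := by
        rw [← mul_sub, ← abs_mul]; exact le_abs_self _
    _ ≤ _ := mul_le_mul (le_sup' (fun a => |p.coeff a|) ha) (h a ha) (abs_nonneg _)
        ((abs_nonneg _).trans (le_sup' (fun a => |p.coeff a|) ha))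

end MvPolynomial

theorem stmt2_general (n : ℕ) (m : ℕ) (hm : 2 ≤ m)
    (S : Set (Fin n → ℝ)) (hS : S.Nonempty) (hScompact : IsCompact S)
    (hSsub : S ⊆ Set.Icc 0 1)
    (p : MvPolynomial (Fin n) ℝ) (hdeg : p.totalDegree ≤ m)
    (hsupp : p.support.Nonempty)
    (zS zmon : ℝ)
    (hzS : zS = sInf ((fun x => MvPolynomial.eval x p) '' S))
    (hzmon : zmon = sInf {z : ℝ | ∃ x ∈ S, ∃ w : (Fin n →₀ ℕ) → ℝ,
      (∀ a ∈ p.support, (x, w a) ∈ convexHull ℝ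
        {q : (Fin n → ℝ) × ℝ | q.1 ∈ S ∧ q.2 = ∏ j, q.1 j ^ a j}) ∧
      z = ∑ a ∈ p.support, p.coeff a * w a}) :
    zS - zmon ≤ (p.support.sup' hsupp fun a => |p.coeff a|) *
      ((1 - 1 / (m : ℝ)) * (m : ℝ) ^ ((1 : ℝ) / (1 - (m : ℝ)))) * (n + m).choose n := by
  set M := p.support.sup' hsupp fun a => |p.coeff a|
  change zS - zmon ≤ M * powGap m * (n + m).choose n
  have hgraph (a : Fin n →₀ ℕ) : {q : (Fin n → ℝ) × ℝ | q.1 ∈ S ∧ q.2 = ∏ j, q.1 j ^ a j} =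
      S.graphOn fun y => ∏ j, y j ^ a j := by
    ext q; simp [eq_comm]
  have hM : 0 ≤ M := (abs_nonneg _).trans (le_sup' (fun a => |p.coeff a|) hsupp.choose_spec)
  have hbound : M * powGap m * #p.support ≤ M * powGap m * (n + m).choose n :=
    mul_le_mul_of_nonneg_left (by exact_mod_cast p.card_support_le_choose hdeg)
      (mul_nonneg hM (powGap_nonneg hm))
  suffices zS - M * powGap m * #p.support ≤ zmon by linarith
  obtain ⟨x₀, hx₀⟩ := hS
  rw [hzmon]
  refine le_csInf ⟨_, x₀, hx₀, fun a => ∏ j, x₀ j ^ a j,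
    fun a _ => subset_convexHull ℝ _ ⟨hx₀, rfl⟩, rfl⟩ ?_
  rintro _ ⟨x, hx, w, hw, rfl⟩
  have hzS_le : zS ≤ MvPolynomial.eval x p := hzS ▸
    csInf_le (hScompact.image (MvPolynomial.continuous_eval p)).bddBelow ⟨x, hx, rfl⟩
  have hgap := p.eval_sub_sum_coeff_mul_le hsupp x w fun a ha =>
    abs_prod_pow_sub_le_powGap_of_mem_convexHull hm (hdeg.trans' (p.sum_le_totalDegree ha)) hSsub
      (hgraph a ▸ hw a ha)
  linarith

/-- Additive error bound for polynomial optimization via monomial convexification. -/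
theorem stmt2 (n : ℕ) (hn : 1 ≤ n) (m : ℕ) (hm : 2 ≤ m)
    (S : Set (Fin n → ℝ)) (hS : S.Nonempty) (hScompact : IsCompact S)
    (hSconvex : Convex ℝ S) (hSsub : S ⊆ Set.Icc 0 1)
    (p : MvPolynomial (Fin n) ℝ) (hdeg : p.totalDegree ≤ m)
    (hsupp : p.support.Nonempty)
    (zS zmon : ℝ)
    (hzS : zS = sInf ((fun x => MvPolynomial.eval x p) '' S))
    (hzmon : zmon = sInf {z : ℝ | ∃ x ∈ S, ∃ w : (Fin n →₀ ℕ) → ℝ,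
      (∀ a ∈ p.support, (x, w a) ∈ convexHull ℝ
        {q : (Fin n → ℝ) × ℝ | q.1 ∈ S ∧ q.2 = ∏ j, q.1 j ^ a j}) ∧
      z = ∑ a ∈ p.support, p.coeff a * w a}) :
    zS - zmon ≤ (p.support.sup' hsupp fun a => |p.coeff a|) *
      ((1 - 1 / (m : ℝ)) * (m : ℝ) ^ ((1 : ℝ) / (1 - (m : ℝ)))) * (n + m).choose n :=
  stmt2_general n m hm S hS hScompact hSsub p hdeg hsupp zS zmon hzS hzmon
end

section
/- Let r > 1 be a real number and n ≥ 2 an integer. For x ∈ [1,r]^n define Conc(x) = (min over all permutations σ of {1,…,n} of Σ_{j=1}^n r^{j−1} x_{σ(j)}) − Σ_{j=1}^{n−1} r^j (this is the concave envelope of the multilinear monomial over [1,r]^n). Then the maximum over x ∈ [1,r]^n of Conc(x) − ∏_{j=1}^n x_j equals E_{r,n} := 1 + ((r^n − 1)/(r − 1)) · [ ((n−1)/n) · ((r^n − 1)/(n(r−1)))^{1/(n−1)} − 1 ], and this maximum is attained only at points of the form t·1 with 1 < t < r (1 denoting the all-ones vector). -/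
/-!
Let `S = ∑_{j<n} r^j`, let `x` lie in the box and let `t` be its geometric mean. Sort `x`
decreasingly into `y`. Then both `j ↦ r^j y_j` (because `1 ≤ y ≤ r`) and
`j ↦ log t - log y_j` increase, and the latter sums to zero, so Chebyshev's sum inequality
gives `∑ r^j y_j (log t - log y_j) ≥ 0`. Combined with `y (log t - log y) ≤ t - y` this yields
`min_σ ∑ r^j x_{σ j} ≤ ∑ r^j y_j ≤ S t`, with equality only if `y` is constant. Since
`∏ x = t^n`, the envelope error is at most `S t - t^n - (S - 1)`, and by the tangent line
inequality for the strictly convex `t ↦ t^n` this is maximal exactly at the `t*` with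
`n t*^(n-1) = S`, which lies in `(1, r)` and gives the value `E`.
-/

open Finset Real

theorem one_add_mul_sub_lt_pow {n : ℕ} (hn : 2 ≤ n) {u : ℝ} (hu : 0 ≤ u) (hu1 : u ≠ 1) :
    1 + n * (u - 1) < u ^ n := by
  have h := one_add_mul_self_lt_rpow_one_add (s := u - 1) (by linarith) (sub_ne_zero.2 hu1)
    (p := n) (by exact_mod_cast hn)
  simpa using h

theorem pow_mul_one_add_mul_div_sub_one (n : ℕ) {c : ℝ} (hc : c ≠ 0) (t : ℝ) :
    c ^ n * (1 + n * (t / c - 1)) = c ^ n + n * c ^ (n - 1) * (t - c) := by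
  rcases n with _ | n
  · simp
  · rw [Nat.add_sub_cancel]
    field_simp
    ring

theorem pow_add_mul_sub_le_pow_s4 (n : ℕ) {c t : ℝ} (hc : 0 < c) (ht : 0 ≤ t) :
    c ^ n + n * c ^ (n - 1) * (t - c) ≤ t ^ n := by
  have hu : -1 ≤ t / c := by linarith [div_nonneg ht hc.le]
  calc c ^ n + n * c ^ (n - 1) * (t - c) = c ^ n * (1 + n * (t / c - 1)) :=
        (pow_mul_one_add_mul_div_sub_one n hc.ne' t).symm
    _ ≤ c ^ n * (t / c) ^ n := by gcongr; exact one_add_mul_sub_le_pow hu n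
    _ = t ^ n := by rw [div_pow, mul_div_cancel₀ _ (pow_ne_zero _ hc.ne')]

theorem pow_add_mul_sub_lt_pow {n : ℕ} (hn : 2 ≤ n) {c t : ℝ} (hc : 0 < c) (ht : 0 ≤ t)
    (htc : t ≠ c) : c ^ n + n * c ^ (n - 1) * (t - c) < t ^ n := by
  have hu : t / c ≠ 1 := by rwa [ne_eq, div_eq_one_iff_eq hc.ne']
  calc c ^ n + n * c ^ (n - 1) * (t - c) = c ^ n * (1 + n * (t / c - 1)) :=
        (pow_mul_one_add_mul_div_sub_one n hc.ne' t).symm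
    _ < c ^ n * (t / c) ^ n := by
        gcongr; exact one_add_mul_sub_lt_pow hn (div_nonneg ht hc.le) hu
    _ = t ^ n := by rw [div_pow, mul_div_cancel₀ _ (pow_ne_zero _ hc.ne')]

theorem mul_log_sub_log_le {y t : ℝ} (hy : 0 < y) (ht : 0 < t) :
    y * (log t - log y) ≤ t - y := by
  have h := mul_le_mul_of_nonneg_left (log_le_sub_one_of_pos (div_pos ht hy)) hy.le
  rw [log_div ht.ne' hy.ne'] at h
  calc y * (log t - log y) ≤ y * (t / y - 1) := h
    _ = t - y := by field_simp

theorem mul_log_sub_log_lt {y t : ℝ} (hy : 0 < y) (ht : 0 < t) (hyt : y ≠ t) :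
    y * (log t - log y) < t - y := by
  have h := mul_lt_mul_of_pos_left (log_lt_sub_one_of_pos (div_pos ht hy)
    (by rwa [ne_eq, div_eq_one_iff_eq hy.ne', eq_comm])) hy
  rw [log_div ht.ne' hy.ne'] at h
  calc y * (log t - log y) < y * (t / y - 1) := h
    _ = t - y := by field_simp

theorem exists_pos_pow_card_eq_prod {ι : Type*} [Fintype ι] {y : ι → ℝ}
    (hy : ∀ i, 0 < y i) :
    ∃ t : ℝ, 0 < t ∧ ∏ i, y i = t ^ Fintype.card ι := by
  have hprod : 0 < ∏ i, y i := prod_pos fun i _ ↦ hy i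
  rcases (Fintype.card ι).eq_zero_or_pos with h | h
  · have := Fintype.card_eq_zero_iff.1 h
    exact ⟨1, one_pos, by simp⟩
  · exact ⟨_, rpow_pos_of_pos hprod _, (rpow_inv_natCast_pow hprod.le h.ne').symm⟩

section GeomMean

variable {ι : Type*} [Fintype ι] [LinearOrder ι] {a y : ι → ℝ} {t : ℝ}

theorem sum_mul_mul_log_sub_log_nonneg (hy : ∀ i, 0 < y i) (hy_anti : Antitone y)
    (hay : Monotone fun i ↦ a i * y i) (hprod : ∏ i, y i = t ^ Fintype.card ι) :
    0 ≤ ∑ i, a i * y i * (log t - log (y i)) := by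
  have hlog_mono : Monotone fun i ↦ log t - log (y i) :=
    fun i j hij ↦ sub_le_sub_left (log_le_log (hy j) (hy_anti hij)) _
  have hlog_sum : ∑ i, (log t - log (y i)) = 0 := by
    rw [sum_sub_distrib, ← log_prod (fun i _ ↦ (hy i).ne'), hprod, log_pow]
    simp
  have hcheb := (hay.monovary hlog_mono).sum_mul_sum_le_card_mul_sum
  rw [hlog_sum, mul_zero] at hcheb
  rcases isEmpty_or_nonempty ι with _ | _
  · simp
  · exact nonneg_of_mul_nonneg_right hcheb (by exact_mod_cast Fintype.card_pos)

theorem sum_mul_le_sum_mul_of_prod_eq_pow (ha : ∀ i, 0 ≤ a i) (hy : ∀ i, 0 < y i)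
    (hy_anti : Antitone y) (hay : Monotone fun i ↦ a i * y i) (ht : 0 < t)
    (hprod : ∏ i, y i = t ^ Fintype.card ι) :
    ∑ i, a i * y i ≤ (∑ i, a i) * t := by
  have hterm : ∀ i, a i * y i * (log t - log (y i)) ≤ a i * (t - y i) := fun i ↦ by
    rw [mul_assoc]; exact mul_le_mul_of_nonneg_left (mul_log_sub_log_le (hy i) ht) (ha i)
  have := (sum_mul_mul_log_sub_log_nonneg hy hy_anti hay hprod).trans
    (sum_le_sum fun i _ ↦ hterm i)
  simp only [mul_sub, sum_sub_distrib, ← sum_mul] at this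
  linarith

theorem eq_of_sum_mul_eq_sum_mul_of_prod_eq_pow (ha : ∀ i, 0 < a i) (hy : ∀ i, 0 < y i)
    (hy_anti : Antitone y) (hay : Monotone fun i ↦ a i * y i) (ht : 0 < t)
    (hprod : ∏ i, y i = t ^ Fintype.card ι) (heq : ∑ i, a i * y i = (∑ i, a i) * t)
    (i : ι) : y i = t := by
  by_contra hne
  have hterm : ∀ i, a i * y i * (log t - log (y i)) ≤ a i * (t - y i) := fun i ↦ by
    rw [mul_assoc]; exact mul_le_mul_of_nonneg_left (mul_log_sub_log_le (hy i) ht) (ha i).le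
  have hlt := (sum_mul_mul_log_sub_log_nonneg hy hy_anti hay hprod).trans_lt
    (sum_lt_sum (fun i _ ↦ hterm i) ⟨i, mem_univ i, by
      rw [mul_assoc]; exact mul_lt_mul_of_pos_left (mul_log_sub_log_lt (hy i) ht hne) (ha i)⟩)
  simp only [mul_sub, sum_sub_distrib, ← sum_mul] at hlt
  linarith

end GeomMean

theorem exists_perm_antitone_comp {n : ℕ} {α : Type*} [LinearOrder α] (x : Fin n → α) :
    ∃ σ : Equiv.Perm (Fin n), Antitone (x ∘ σ) :=
  ⟨Fin.revPerm.trans (Tuple.sort x),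
    fun _ _ hij ↦ Tuple.monotone_sort x (Fin.rev_le_rev.2 hij)⟩

theorem monotone_pow_mul {n : ℕ} {r : ℝ} (hr : 1 ≤ r) {y : Fin n → ℝ}
    (hy1 : ∀ j, 1 ≤ y j) (hyr : ∀ j, y j ≤ r) : Monotone fun j : Fin n ↦ r ^ (j : ℕ) * y j := by
  intro i j hij
  rcases hij.eq_or_lt with rfl | hlt
  · rfl
  calc r ^ (i : ℕ) * y i ≤ r ^ ((i : ℕ) + 1) := by
        rw [pow_succ]; gcongr; exact hyr i
    _ ≤ r ^ (j : ℕ) := pow_le_pow_right₀ hr hlt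
    _ ≤ r ^ (j : ℕ) * y j := le_mul_of_one_le_right (by positivity) (hy1 j)

noncomputable def minWeightedPermSum {n : ℕ} (r : ℝ) (x : Fin n → ℝ) : ℝ :=
  ⨅ σ : Equiv.Perm (Fin n), ∑ j : Fin n, r ^ (j : ℕ) * x (σ j)

section MinWeightedPermSum

variable {n : ℕ} {r t : ℝ} {x : Fin n → ℝ}

theorem minWeightedPermSum_le (σ : Equiv.Perm (Fin n)) :
    minWeightedPermSum r x ≤ ∑ j : Fin n, r ^ (j : ℕ) * x (σ j) :=
  ciInf_le (Finite.bddBelow_range _) σ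

theorem minWeightedPermSum_const :
    minWeightedPermSum r (fun _ : Fin n ↦ t) = (∑ j : Fin n, r ^ (j : ℕ)) * t := by
  simp [minWeightedPermSum, sum_mul]

theorem minWeightedPermSum_le_sum_mul (hr : 1 ≤ r) (hx : x ∈ Set.Icc 1 fun _ ↦ r)
    (ht : 0 < t) (hprod : ∏ j, x j = t ^ n) :
    minWeightedPermSum r x ≤ (∑ j : Fin n, r ^ (j : ℕ)) * t := by
  obtain ⟨σ, hσ⟩ := exists_perm_antitone_comp x
  have hy1 : ∀ j, 1 ≤ x (σ j) := fun j ↦ hx.1 (σ j)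
  have hyr : ∀ j, x (σ j) ≤ r := fun j ↦ hx.2 (σ j)
  have hprod' : ∏ j, x (σ j) = t ^ Fintype.card (Fin n) := by
    rw [Fintype.card_fin, ← hprod]; exact Equiv.prod_comp σ x
  exact (minWeightedPermSum_le σ).trans <| sum_mul_le_sum_mul_of_prod_eq_pow
    (fun j ↦ by positivity) (fun j ↦ zero_lt_one.trans_le (hy1 j)) hσ (monotone_pow_mul hr hy1 hyr) ht hprod'

theorem eq_const_of_minWeightedPermSum_eq (hr : 1 ≤ r) (hx : x ∈ Set.Icc 1 fun _ ↦ r)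
    (ht : 0 < t) (hprod : ∏ j, x j = t ^ n)
    (heq : minWeightedPermSum r x = (∑ j : Fin n, r ^ (j : ℕ)) * t) : x = fun _ ↦ t := by
  obtain ⟨σ, hσ⟩ := exists_perm_antitone_comp x
  have hy1 : ∀ j, 1 ≤ x (σ j) := fun j ↦ hx.1 (σ j)
  have hyr : ∀ j, x (σ j) ≤ r := fun j ↦ hx.2 (σ j)
  have hprod' : ∏ j, x (σ j) = t ^ Fintype.card (Fin n) := by
    rw [Fintype.card_fin, ← hprod]; exact Equiv.prod_comp σ x
  have hle := sum_mul_le_sum_mul_of_prod_eq_pow (fun j ↦ by positivity)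
    (fun j ↦ zero_lt_one.trans_le (hy1 j)) hσ (monotone_pow_mul hr hy1 hyr) ht hprod'
  have hconst := eq_of_sum_mul_eq_sum_mul_of_prod_eq_pow (fun j ↦ by positivity)
    (fun j ↦ zero_lt_one.trans_le (hy1 j)) hσ (monotone_pow_mul hr hy1 hyr) ht hprod'
    (le_antisymm hle (heq ▸ minWeightedPermSum_le σ))
  funext j
  simpa using hconst (σ.symm j)

end MinWeightedPermSum

section Envelope

variable {n : ℕ} {r c : ℝ} {x : Fin n → ℝ}

theorem minWeightedPermSum_sub_prod_le (hr : 1 ≤ r) (hx : x ∈ Set.Icc 1 fun _ ↦ r)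
    (hc : 0 < c) (hS : ∑ j : Fin n, r ^ (j : ℕ) = n * c ^ (n - 1)) :
    minWeightedPermSum r x - ∏ j, x j ≤ (∑ j : Fin n, r ^ (j : ℕ)) * c - c ^ n := by
  obtain ⟨t, ht, hprod⟩ := exists_pos_pow_card_eq_prod fun j ↦ zero_lt_one.trans_le (hx.1 j)
  rw [Fintype.card_fin] at hprod
  have hmin := minWeightedPermSum_le_sum_mul hr hx ht hprod
  have htangent := pow_add_mul_sub_le_pow_s4 n hc ht.le
  rw [← hS] at htangent
  linarith

theorem eq_const_of_minWeightedPermSum_sub_prod_eq (hn : 2 ≤ n) (hr : 1 ≤ r)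
    (hx : x ∈ Set.Icc 1 fun _ ↦ r) (hc : 0 < c)
    (hS : ∑ j : Fin n, r ^ (j : ℕ) = n * c ^ (n - 1))
    (heq : minWeightedPermSum r x - ∏ j, x j = (∑ j : Fin n, r ^ (j : ℕ)) * c - c ^ n) :
    x = fun _ ↦ c := by
  obtain ⟨t, ht, hprod⟩ := exists_pos_pow_card_eq_prod fun j ↦ zero_lt_one.trans_le (hx.1 j)
  rw [Fintype.card_fin] at hprod
  have hmin := minWeightedPermSum_le_sum_mul hr hx ht hprod
  have htc : t = c := by
    by_contra htc
    have htangent := pow_add_mul_sub_lt_pow hn hc ht.le htc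
    rw [← hS] at htangent
    linarith
  subst htc
  exact eq_const_of_minWeightedPermSum_eq hr hx ht hprod (by linarith)

end Envelope

theorem natCast_lt_sum_pow {n : ℕ} (hn : 2 ≤ n) {r : ℝ} (hr : 1 < r) :
    (n : ℝ) < ∑ j : Fin n, r ^ (j : ℕ) := by
  calc (n : ℝ) = ∑ _j : Fin n, (1 : ℝ) := by simp
    _ < ∑ j : Fin n, r ^ (j : ℕ) :=
      sum_lt_sum (fun j _ ↦ one_le_pow₀ hr.le) ⟨⟨1, hn⟩, mem_univ _, by simpa using hr⟩

theorem sum_pow_lt_mul_pow {n : ℕ} (hn : 2 ≤ n) {r : ℝ} (hr : 1 < r) :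
    ∑ j : Fin n, r ^ (j : ℕ) < n * r ^ (n - 1) := by
  calc ∑ j : Fin n, r ^ (j : ℕ) < ∑ _j : Fin n, r ^ (n - 1) :=
        sum_lt_sum (fun j _ ↦ pow_le_pow_right₀ hr.le (by omega))
          ⟨⟨0, by omega⟩, mem_univ _, by simpa using one_lt_pow₀ hr (by omega)⟩
    _ = n * r ^ (n - 1) := by simp

theorem rpow_one_div_sub_one_pow {n : ℕ} (hn : 2 ≤ n) {q : ℝ} (hq : 0 ≤ q) :
    (q ^ ((1 : ℝ) / ((n : ℝ) - 1))) ^ (n - 1) = q := by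
  rw [← rpow_natCast, ← rpow_mul hq, Nat.cast_sub (by omega), Nat.cast_one,
    one_div_mul_cancel (sub_ne_zero.2 (by norm_cast; omega)), rpow_one]

theorem critical_point_spec {n : ℕ} (hn : 2 ≤ n) {r c : ℝ} (hr : 1 < r)
    (hc : c = ((∑ j : Fin n, r ^ (j : ℕ)) / n) ^ ((1 : ℝ) / ((n : ℝ) - 1))) :
    1 < c ∧ c < r ∧ ∑ j : Fin n, r ^ (j : ℕ) = n * c ^ (n - 1) := by
  have hn0 : (0 : ℝ) < n := by positivity
  have hq1 : 1 < (∑ j : Fin n, r ^ (j : ℕ)) / n := by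
    rw [one_lt_div hn0]; exact natCast_lt_sum_pow hn hr
  have hpow : c ^ (n - 1) = (∑ j : Fin n, r ^ (j : ℕ)) / n := hc ▸ rpow_one_div_sub_one_pow hn
    (zero_le_one.trans hq1.le)
  have hc0 : 0 ≤ c := hc ▸ rpow_nonneg (zero_le_one.trans hq1.le) _
  refine ⟨?_, ?_, ?_⟩
  · exact (one_lt_pow_iff_of_nonneg hc0 (by omega)).1 (hpow ▸ hq1)
  · refine lt_of_pow_lt_pow_left₀ (n - 1) (by linarith) ?_
    rw [hpow, div_lt_iff₀ hn0, mul_comm]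
    exact sum_pow_lt_mul_pow hn hr
  · rw [hpow]; field_simp

/-- Concave envelope error of the multilinear monomial over `[1,r]^n`. -/
theorem stmt4 (n : ℕ) (hn : 2 ≤ n) (r : ℝ) (hr : 1 < r)
    (Conc : (Fin n → ℝ) → ℝ)
    (hConc : ∀ x, Conc x =
      (⨅ σ : Equiv.Perm (Fin n), ∑ j : Fin n, r ^ (j : ℕ) * x (σ j)) - ∑ j ∈ Finset.Ico 1 n, r ^ j)
    (E : ℝ)
    (hE : E = 1 + (r ^ n - 1) / (r - 1) *
      (((n : ℝ) - 1) / n * ((r ^ n - 1) / (n * (r - 1))) ^ ((1 : ℝ) / ((n : ℝ) - 1)) - 1)) :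
    IsGreatest ((fun x => Conc x - ∏ j, x j) '' Set.Icc (1 : Fin n → ℝ) (fun _ => r)) E ∧
    ∀ x ∈ Set.Icc (1 : Fin n → ℝ) (fun _ => r),
      Conc x - ∏ j, x j = E → ∃ t : ℝ, 1 < t ∧ t < r ∧ x = fun _ => t := by
  set S := ∑ j : Fin n, r ^ (j : ℕ) with hS
  have hgeom : S = (r ^ n - 1) / (r - 1) := by
    rw [hS, Fin.sum_univ_eq_sum_range (r ^ ·), geom_sum_eq hr.ne']
  set c := (S / n) ^ ((1 : ℝ) / ((n : ℝ) - 1)) with hc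
  obtain ⟨hc1, hcr, hSc⟩ := critical_point_spec hn hr hc
  rw [← hS] at hSc
  have hE' : E = S * c - c ^ n - (S - 1) := by
    have hcn : c ^ n = S / n * c := by
      rw [← pow_sub_one_mul (by omega : n ≠ 0), hSc]; field_simp
    rw [hE, hcn, hc, hgeom]
    field_simp
    ring
  have hobj : ∀ x, Conc x - ∏ j, x j = (minWeightedPermSum r x - ∏ j, x j) - (S - 1) := by
    intro x
    rw [hConc, sum_Ico_eq_sub _ (by omega : 1 ≤ n), ← Fin.sum_univ_eq_sum_range (r ^ ·),
      sum_range_one, pow_zero, minWeightedPermSum]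
    ring
  refine ⟨⟨⟨fun _ ↦ c, ⟨fun _ ↦ hc1.le, fun _ ↦ hcr.le⟩, ?_⟩, ?_⟩, ?_⟩
  · beta_reduce
    rw [hobj, minWeightedPermSum_const, prod_const, card_univ, Fintype.card_fin, hE']
  · rintro _ ⟨x, hx, rfl⟩
    show Conc x - ∏ j, x j ≤ E
    have := minWeightedPermSum_sub_prod_le hr.le hx (zero_lt_one.trans hc1) hSc
    rw [hobj, hE']
    linarith
  · intro x hx heq
    rw [hobj, hE'] at heq
    exact ⟨c, hc1, hcr, eq_const_of_minWeightedPermSum_sub_prod_eq hn hr.le hx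
      (zero_lt_one.trans hc1) hSc (by linarith)⟩
end

section
/- Let r > 1 be a real number and n ≥ 2 an integer. For x ∈ [1,r]^n define Conv(x) = max_{1 ≤ i ≤ n} r^{i−1}·(Σ_{j=1}^n x_j − (n−i) − r(i−1)) (this is the convex envelope of the multilinear monomial over [1,r]^n). Then the maximum over x ∈ [1,r]^n of ∏_{j=1}^n x_j − Conv(x) equals D_{r,n} := max_{1 ≤ i ≤ n−1} [ (1 + (i/n)(r−1))^n − r^i ], and this maximum is attained only at points of the form t·1 with 1 < t < r (1 denoting the all-ones vector). -/
/-!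
Conv depends on `x` only through `s = ∑ x_j`, while AM-GM gives `∏ x_j ≤ (s/n)^n`, strictly
unless `x` is constant; so it suffices to bound `t^n - Conv (t • 1)` for the mean `t ∈ [1, r]`.
Cut `[1, r]` at the grid points `t_k = 1 + (k/n)(r - 1)`, `k = 0, …, n`. On `[t_i, t_{i+1}]`
Conv is at least its `i`-th affine piece, and `t ↦ t^n - (that piece)` is convex, hence bounded by
its values at the endpoints. At `t_k` the envelope equals `r^k` (Bernoulli's inequality bounds
every other piece), so those values are `gap_k = t_k^n - r^k`. Since `gap_0 = gap_n = 0 < gap_1`,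
the maximum is `max_{0<k<n} gap_k`, and it is attained only at interior constant vectors.
-/

open Finset

section AMGM

variable {ι : Type*} [Fintype ι] [Nonempty ι] (z : ι → ℝ)

lemma prod_le_mean_pow (hz : ∀ i, 0 ≤ z i) :
    ∏ i, z i ≤ ((∑ i, z i) / Fintype.card ι) ^ Fintype.card ι := by
  have h := Real.geom_mean_le_arith_mean_weighted univ (fun _ => (Fintype.card ι : ℝ)⁻¹) z
    (fun _ _ => by positivity) (by simp [card_univ]) (fun i _ => hz i)
  rw [Real.finsetProd_rpow _ _ (fun i _ => hz i), ← mul_sum, inv_mul_eq_div,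
    Real.rpow_inv_le_iff_of_pos (prod_nonneg fun i _ => hz i)
      (div_nonneg (sum_nonneg fun i _ => hz i) (by positivity)) (by positivity)] at h
  exact_mod_cast h

lemma prod_lt_mean_pow (hz : ∀ i, 0 ≤ z i) (hne : ∃ j k, z j ≠ z k) :
    ∏ i, z i < ((∑ i, z i) / Fintype.card ι) ^ Fintype.card ι := by
  obtain ⟨j, k, hjk⟩ := hne
  have h := (Real.geom_mean_lt_arith_mean_weighted_iff_of_pos univ
    (fun _ => (Fintype.card ι : ℝ)⁻¹) z (fun _ _ => by positivity) (by simp [card_univ])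
    (fun i _ => hz i)).2 ⟨j, mem_univ _, k, mem_univ _, hjk⟩
  rw [Real.finsetProd_rpow _ _ (fun i _ => hz i), ← mul_sum, inv_mul_eq_div,
    Real.rpow_inv_lt_iff_of_pos (prod_nonneg fun i _ => hz i)
      (div_nonneg (sum_nonneg fun i _ => hz i) (by positivity)) (by positivity)] at h
  exact_mod_cast h

lemma mean_mem_Icc {x : ι → ℝ} {a b : ℝ} (hx : ∀ i, x i ∈ Set.Icc a b) :
    (∑ i, x i) / Fintype.card ι ∈ Set.Icc a b := by
  have hcard : (0 : ℝ) < Fintype.card ι := by exact_mod_cast Fintype.card_pos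
  constructor
  · rw [le_div_iff₀ hcard, mul_comm, ← nsmul_eq_mul, ← card_univ, ← sum_const]
    exact sum_le_sum fun i _ => (hx i).1
  · rw [div_le_iff₀ hcard, mul_comm, ← nsmul_eq_mul, ← card_univ, ← sum_const]
    exact sum_le_sum fun i _ => (hx i).2

end AMGM

lemma one_add_mul_sub_le_zpow {a : ℝ} (ha : 0 < a) (d : ℤ) : 1 + d * (a - 1) ≤ a ^ d := by
  rcases Int.eq_nat_or_neg d with ⟨m, rfl | rfl⟩
  · simpa using one_add_mul_sub_le_pow (by linarith : -1 ≤ a) m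
  · have hinv : 1 - a ≤ a⁻¹ - 1 := by
      have : a + a⁻¹ - 2 = (a - 1) ^ 2 / a := by field_simp; ring
      nlinarith [show 0 ≤ (a - 1) ^ 2 / a by positivity]
    have hb := one_add_mul_sub_le_pow (by linarith [inv_pos.2 ha] : -1 ≤ a⁻¹) m
    rw [zpow_neg, zpow_natCast, ← inv_pow]
    push_cast
    nlinarith [(Nat.cast_nonneg m : (0:ℝ) ≤ m)]

lemma exists_le_le_succ_of_le_of_le {α : Type*} [LinearOrder α] {g : ℕ → α} {t : α}
    {n : ℕ} (hn : 0 < n) (h0 : g 0 ≤ t) (hn' : t ≤ g n) : ∃ i < n, g i ≤ t ∧ t ≤ g (i + 1) := by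
  induction n, hn using Nat.le_induction with
  | base => exact ⟨0, one_pos, h0, hn'⟩
  | succ m hm ih =>
    rcases le_or_gt t (g m) with h | h
    · obtain ⟨i, hi, hgi⟩ := ih h
      exact ⟨i, hi.trans (Nat.lt_succ_self m), hgi⟩
    · exact ⟨m, Nat.lt_succ_self m, h.le, hn'⟩

noncomputable section

namespace MonomialEnvelope

variable (n : ℕ) (r : ℝ)

def gridPoint (k : ℕ) : ℝ := 1 + k / n * (r - 1)

-- the `i`-th affine function in the definition of Conv, written in terms of `s = ∑ j, x j`
def affinePiece (i : ℕ) (s : ℝ) : ℝ := r ^ i * (s - ((n : ℝ) - i - 1) - r * i)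

def envelope (s : ℝ) : ℝ := ⨆ i : Fin n, affinePiece n r i s

def gap (k : ℕ) : ℝ := gridPoint n r k ^ n - r ^ k

def maxGap : ℝ := ⨆ i : Fin (n - 1), gap n r (i + 1)

variable {n r}

lemma gridPoint_zero : gridPoint n r 0 = 1 := by simp [gridPoint]

lemma gridPoint_self (hn : n ≠ 0) : gridPoint n r n = r := by
  simp [gridPoint, hn]

lemma affinePiece_gridPoint (hn : n ≠ 0) (i k : ℕ) :
    affinePiece n r i (n * gridPoint n r k) = r ^ i * (1 + ((k : ℤ) - i) * (r - 1)) := by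
  simp only [affinePiece, gridPoint]
  field_simp
  push_cast
  ring

lemma affinePiece_le_envelope {i : ℕ} (hi : i < n) (s : ℝ) :
    affinePiece n r i s ≤ envelope n r s :=
  le_ciSup (f := fun i : Fin n => affinePiece n r i s) (Set.finite_range _).bddAbove ⟨i, hi⟩

lemma envelope_gridPoint (hn : n ≠ 0) (hr : 0 < r) {k : ℕ} (hk : k ≤ n) :
    envelope n r (n * gridPoint n r k) = r ^ k := by
  have : NeZero n := ⟨hn⟩
  apply le_antisymm
  · refine ciSup_le fun i => ?_
    calc affinePiece n r i (n * gridPoint n r k)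
        = r ^ (i : ℕ) * (1 + ((k : ℤ) - i) * (r - 1)) := affinePiece_gridPoint hn i k
      _ ≤ r ^ (i : ℕ) * r ^ ((k : ℤ) - i) := by
          gcongr; exact_mod_cast one_add_mul_sub_le_zpow hr ((k : ℤ) - i)
      _ = r ^ k := by
          rw [← zpow_natCast, ← zpow_add₀ hr.ne']; simp
  · rcases hk.lt_or_eq with hk | hk
    · simpa [affinePiece_gridPoint hn] using
        affinePiece_le_envelope (r := r) hk (n * gridPoint n r k)
    · subst k
      -- the last piece also passes through `(n * r, r ^ n)`
      have := affinePiece_le_envelope (r := r) (Nat.sub_one_lt hn) (n * gridPoint n r n)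
      rw [affinePiece_gridPoint hn, Nat.cast_sub (Nat.one_le_iff_ne_zero.2 hn)] at this
      rw [← pow_sub_one_mul hn]
      simpa using this

lemma pow_sub_affinePiece_le (hn : n ≠ 0) (hr : 1 ≤ r) (i : ℕ) {t : ℝ}
    (ht : t ∈ Set.Icc (gridPoint n r i) (gridPoint n r (i + 1))) :
    t ^ n - affinePiece n r i (n * t) ≤ max (gap n r i) (gap n r (i + 1)) := by
  have hconvex : ConvexOn ℝ (Set.Ici 0) fun t : ℝ => t ^ n - affinePiece n r i (n * t) := by
    have hline : ConcaveOn ℝ (Set.Ici 0) fun t : ℝ =>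
        (r ^ i * n) • t + r ^ i * (-((n : ℝ) - i - 1) - r * i) :=
      ((concaveOn_id (convex_Ici 0)).smul (by positivity)).add_const _
    refine ((convexOn_pow n).sub hline).congr fun t _ => ?_
    simp only [Pi.sub_apply, affinePiece, smul_eq_mul]
    ring
  have hgrid (k : ℕ) : 0 ≤ gridPoint n r k := by
    have : 0 ≤ r - 1 := by linarith
    unfold gridPoint; positivity
  have hleft : gridPoint n r i ^ n - affinePiece n r i (n * gridPoint n r i) = gap n r i := by
    simp [affinePiece_gridPoint hn, gap]
  have hright : gridPoint n r (i + 1) ^ n - affinePiece n r i (n * gridPoint n r (i + 1)) =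
      gap n r (i + 1) := by
    simp only [affinePiece_gridPoint hn, gap]; push_cast; ring
  rw [← hleft, ← hright]
  exact hconvex.le_on_segment (hgrid i) (hgrid (i + 1))
    (by rwa [segment_eq_Icc (ht.1.trans ht.2)])

lemma gap_zero : gap n r 0 = 0 := by simp [gap, gridPoint_zero]

lemma gap_self (hn : n ≠ 0) : gap n r n = 0 := by simp [gap, gridPoint_self hn]

lemma gap_one_pos (hn : 2 ≤ n) (hr : 1 < r) : 0 < gap n r 1 := by
  have hn0 : (0 : ℝ) < n := by positivity
  have hstep : 0 < (r - 1) / n := div_pos (by linarith) hn0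
  have hbernoulli := one_add_mul_self_lt_rpow_one_add (by linarith) hstep.ne'
    (p := n) (by exact_mod_cast hn)
  rw [Real.rpow_natCast, mul_div_cancel₀ _ hn0.ne'] at hbernoulli
  simp only [gap, gridPoint, pow_one, Nat.cast_one, one_div_mul_eq_div]
  linarith

lemma gap_le_maxGap_of_pos_of_lt {k : ℕ} (hk0 : 0 < k) (hkn : k < n) :
    gap n r k ≤ maxGap n r := by
  have := le_ciSup (f := fun i : Fin (n - 1) => gap n r (i + 1)) (Set.finite_range _).bddAbove
    ⟨k - 1, by omega⟩
  simpa [maxGap, Nat.sub_add_cancel hk0] using this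

lemma maxGap_pos (hn : 2 ≤ n) (hr : 1 < r) : 0 < maxGap n r :=
  (gap_one_pos hn hr).trans_le (gap_le_maxGap_of_pos_of_lt one_pos (by omega))

lemma gap_le_maxGap (hn : 2 ≤ n) (hr : 1 < r) {k : ℕ} (hk : k ≤ n) :
    gap n r k ≤ maxGap n r := by
  rcases Nat.eq_zero_or_pos k with rfl | hk0
  · exact gap_zero.trans_le (maxGap_pos hn hr).le
  rcases hk.lt_or_eq with hkn | rfl
  · exact gap_le_maxGap_of_pos_of_lt hk0 hkn
  · exact (gap_self (by omega)).trans_le (maxGap_pos hn hr).le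

lemma pow_sub_envelope_le_maxGap (hn : 2 ≤ n) (hr : 1 < r) {t : ℝ} (ht1 : 1 ≤ t)
    (htr : t ≤ r) :
    t ^ n - envelope n r (n * t) ≤ maxGap n r := by
  obtain ⟨i, hin, hti⟩ := exists_le_le_succ_of_le_of_le (g := gridPoint n r) (by omega)
    (gridPoint_zero.trans_le ht1) (htr.trans_eq (gridPoint_self (by omega)).symm)
  calc t ^ n - envelope n r (n * t) ≤ t ^ n - affinePiece n r i (n * t) := by
        gcongr; exact affinePiece_le_envelope hin _
    _ ≤ max (gap n r i) (gap n r (i + 1)) := pow_sub_affinePiece_le (by omega) hr.le i hti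
    _ ≤ maxGap n r := max_le (gap_le_maxGap hn hr (by omega)) (gap_le_maxGap hn hr hin)

lemma pow_sub_envelope_gridPoint (hn : n ≠ 0) (hr : 0 < r) {k : ℕ} (hk : k ≤ n) :
    gridPoint n r k ^ n - envelope n r (n * gridPoint n r k) = gap n r k := by
  rw [envelope_gridPoint hn hr hk, gap]

lemma gridPoint_mem_Ioo (hr : 1 < r) {k : ℕ} (hk0 : 0 < k) (hkn : k < n) :
    gridPoint n r k ∈ Set.Ioo 1 r := by
  have hn : (0 : ℝ) < n := by exact_mod_cast hk0.trans hkn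
  have hkn' : (k : ℝ) / n < 1 := (div_lt_one hn).2 (by exact_mod_cast hkn)
  have : 0 < (k : ℝ) / n := div_pos (by exact_mod_cast hk0) hn
  constructor <;> simp only [gridPoint] <;> nlinarith

lemma exists_gap_eq_maxGap (hn : 2 ≤ n) : ∃ k, 0 < k ∧ k < n ∧ gap n r k = maxGap n r := by
  have : Nonempty (Fin (n - 1)) := ⟨⟨0, by omega⟩⟩
  obtain ⟨i, hi⟩ := exists_eq_ciSup_of_finite (f := fun i : Fin (n - 1) => gap n r (i + 1))
  exact ⟨i + 1, by omega, by omega, hi⟩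

lemma mean_pow_sub_envelope_le_maxGap (hn : 2 ≤ n) (hr : 1 < r) {x : Fin n → ℝ}
    (hx : ∀ j, x j ∈ Set.Icc 1 r) :
    ((∑ j, x j) / n) ^ n - envelope n r (∑ j, x j) ≤ maxGap n r := by
  have : NeZero n := ⟨by omega⟩
  have hm := mean_mem_Icc hx
  rw [Fintype.card_fin] at hm
  simpa [mul_div_cancel₀ _ (NeZero.ne (n : ℝ))] using pow_sub_envelope_le_maxGap hn hr hm.1 hm.2

lemma prod_sub_envelope_le_maxGap (hn : 2 ≤ n) (hr : 1 < r) {x : Fin n → ℝ}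
    (hx : ∀ j, x j ∈ Set.Icc 1 r) :
    ∏ j, x j - envelope n r (∑ j, x j) ≤ maxGap n r := by
  have : NeZero n := ⟨by omega⟩
  have hamgm := prod_le_mean_pow x fun j => zero_le_one.trans (hx j).1
  rw [Fintype.card_fin] at hamgm
  linarith [mean_pow_sub_envelope_le_maxGap hn hr hx]

lemma exists_eq_const_of_prod_sub_envelope_eq_maxGap (hn : 2 ≤ n) (hr : 1 < r)
    {x : Fin n → ℝ} (hx : ∀ j, x j ∈ Set.Icc 1 r)
    (heq : ∏ j, x j - envelope n r (∑ j, x j) = maxGap n r) : ∃ t, x = fun _ => t := by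
  have : NeZero n := ⟨by omega⟩
  refine ⟨x 0, funext fun j => by_contra fun hj => ?_⟩
  have hamgm := prod_lt_mean_pow x (fun j => zero_le_one.trans (hx j).1) ⟨j, 0, hj⟩
  rw [Fintype.card_fin] at hamgm
  linarith [mean_pow_sub_envelope_le_maxGap hn hr hx]

lemma mem_Ioo_of_pow_sub_envelope_eq_maxGap (hn : 2 ≤ n) (hr : 1 < r) {t : ℝ}
    (ht : t ∈ Set.Icc 1 r) (heq : t ^ n - envelope n r (n * t) = maxGap n r) :
    t ∈ Set.Ioo 1 r := by
  have hn0 : n ≠ 0 := by omega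
  have hgap_pos := maxGap_pos hn hr
  refine ⟨ht.1.lt_of_ne ?_, ht.2.lt_of_ne ?_⟩
  · rintro rfl
    have := pow_sub_envelope_gridPoint hn0 (zero_lt_one.trans hr) (Nat.zero_le n)
    rw [gridPoint_zero, gap_zero] at this
    linarith
  · rintro rfl
    have := pow_sub_envelope_gridPoint hn0 (zero_lt_one.trans hr) le_rfl
    rw [gridPoint_self hn0, gap_self hn0] at this
    linarith

end MonomialEnvelope

end

open MonomialEnvelope in
/-- Convex envelope error of the multilinear monomial over `[1,r]^n`. -/
theorem stmt5 (n : ℕ) (hn : 2 ≤ n) (r : ℝ) (hr : 1 < r)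
    (Conv : (Fin n → ℝ) → ℝ)
    (hConv : ∀ x, Conv x = ⨆ i : Fin n,
      r ^ (i : ℕ) * (∑ j, x j - ((n : ℝ) - (i : ℕ) - 1) - r * (i : ℕ)))
    (D : ℝ)
    (hD : D = ⨆ i : Fin (n - 1),
      ((1 + (((i : ℕ) : ℝ) + 1) / n * (r - 1)) ^ n - r ^ ((i : ℕ) + 1))) :
    IsGreatest ((fun x => (∏ j, x j) - Conv x) '' Set.Icc (1 : Fin n → ℝ) (fun _ => r)) D ∧
    ∀ x ∈ Set.Icc (1 : Fin n → ℝ) (fun _ => r),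
      (∏ j, x j) - Conv x = D → ∃ t : ℝ, 1 < t ∧ t < r ∧ x = fun _ => t := by
  obtain rfl : D = maxGap n r := by simp [hD, maxGap, gap, gridPoint]
  obtain rfl : Conv = fun x => envelope n r (∑ j, x j) := funext hConv
  refine ⟨⟨?_, ?_⟩, fun x hx heq => ?_⟩
  · obtain ⟨k, hk0, hkn, hk⟩ := exists_gap_eq_maxGap (r := r) hn
    have ht := gridPoint_mem_Ioo hr hk0 hkn
    refine ⟨fun _ => gridPoint n r k, ⟨fun _ => ht.1.le, fun _ => ht.2.le⟩, ?_⟩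
    simpa [hk] using pow_sub_envelope_gridPoint (r := r) (by omega) (by linarith) hkn.le
  · rintro _ ⟨x, hx, rfl⟩
    exact prod_sub_envelope_le_maxGap hn hr fun j => ⟨hx.1 j, hx.2 j⟩
  · obtain ⟨t, rfl⟩ :=
      exists_eq_const_of_prod_sub_envelope_eq_maxGap hn hr (fun j => ⟨hx.1 j, hx.2 j⟩) heq
    have ht : t ∈ Set.Ioo 1 r := mem_Ioo_of_pow_sub_envelope_eq_maxGap hn hr
      ⟨hx.1 ⟨0, by omega⟩, hx.2 ⟨0, by omega⟩⟩ (by simpa using heq)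
    exact ⟨t, ht.1, ht.2, rfl⟩
end

section
/- Let n ≥ 2. Then the supremum over (x,w) in the convex hull of G_{[−1,1]^n} of |w − ∏_{j=1}^n x_j| equals 1 + ((n−2)/n)^n, and this value is attained at the point (x,w) with x = ((n−2)/n)·1 (1 the all-ones vector) and w = −1. -/
section AuxStmt6
open Finset

lemma aux_abs_prod_le_one {ι : Type*} (s : Finset ι) (f : ι → ℝ) (h : ∀ i ∈ s, |f i| ≤ 1) :
    |∏ i ∈ s, f i| ≤ 1 := by
  rw [Finset.abs_prod]
  exact Finset.prod_le_one (fun i _ => abs_nonneg _) h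

lemma aux_one_sub_prod_le {ι : Type*} (s : Finset ι) (f : ι → ℝ) (h : ∀ i ∈ s, |f i| ≤ 1) :
    1 - ∏ i ∈ s, f i ≤ ∑ i ∈ s, (1 - f i) := by
  classical
  induction s using Finset.induction_on with
  | empty => simp
  | @insert a s' ha ih =>
    have hfa := h a (mem_insert_self a s')
    have h' : ∀ i ∈ s', |f i| ≤ 1 := fun i hi => h i (mem_insert_of_mem hi)
    have hP : |∏ i ∈ s', f i| ≤ 1 := aux_abs_prod_le_one s' f h'
    have ih' := ih h'
    rw [Finset.prod_insert ha, Finset.sum_insert ha]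
    have h1 : f a * (1 - ∏ i ∈ s', f i) ≤ 1 - ∏ i ∈ s', f i := by
      have : 0 ≤ 1 - ∏ i ∈ s', f i := by cases abs_le.mp hP; linarith
      nlinarith [abs_le.mp hfa]
    nlinarith [abs_le.mp hfa, abs_le.mp hP]

lemma aux_pow_sub_pow (a b : ℝ) (hb : 0 ≤ b) (hba : b ≤ a) (ha : a ≤ 1) :
    ∀ k : ℕ, a ^ k - b ^ k ≤ k * (a - b)
  | 0 => by simp
  | (k + 1) => by
    have ih := aux_pow_sub_pow a b hb hba ha k
    have h1 : b ^ k ≤ a ^ k := pow_le_pow_left₀ hb hba k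
    have h2 : a ^ k ≤ 1 := pow_le_one₀ (hb.trans hba) ha
    have h3 : (0:ℝ) ≤ b ^ k := pow_nonneg hb k
    rw [pow_succ, pow_succ]
    push_cast
    nlinarith

lemma aux_amgm {n : ℕ} (hn : 0 < n) (y : Fin n → ℝ) (hy : ∀ j, 0 ≤ y j) :
    ∏ j, y j ≤ ((∑ j, y j) / n) ^ n := by
  have hne : (n:ℝ) ≠ 0 := Nat.cast_ne_zero.mpr hn.ne'
  have h := Real.geom_mean_le_arith_mean_weighted Finset.univ (fun _ => (n:ℝ)⁻¹) y
    (fun _ _ => by positivity)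
    (by simp [Finset.card_univ, mul_comm]; field_simp)
    (fun j _ => hy j)
  have hrhs : ∑ j, (n:ℝ)⁻¹ * y j = (∑ j, y j) / n := by
    rw [← Finset.mul_sum]; ring
  have hlhs : (∏ j, y j ^ ((n:ℝ)⁻¹)) ^ n = ∏ j, y j := by
    rw [← Finset.prod_pow]
    refine Finset.prod_congr rfl fun j _ => ?_
    rw [← Real.rpow_natCast (y j ^ ((n:ℝ)⁻¹)) n, ← Real.rpow_mul (hy j),
      inv_mul_cancel₀ hne, Real.rpow_one]
  calc ∏ j, y j = (∏ j, y j ^ ((n:ℝ)⁻¹)) ^ n := hlhs.symm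
    _ ≤ ((∑ j, y j) / n) ^ n := by
        apply pow_le_pow_left₀ (Finset.prod_nonneg fun j _ => Real.rpow_nonneg (hy j) _)
        rw [← hrhs]; exact h

lemma aux_L4 {n : ℕ} (hn : 2 ≤ n) (y : Fin n → ℝ) (hy0 : ∀ j, 0 ≤ y j) (hy1 : ∀ j, y j ≤ 1) :
    ∏ j, y j ≤ (((n:ℝ) - 2) / n) ^ n + max 0 (∑ j, y j - ((n:ℝ) - 2)) := by
  have hn2 : (2:ℝ) ≤ n := by exact_mod_cast hn
  have hnpos : (0:ℝ) < n := by linarith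
  set s := ∑ j, y j with hs
  have hs0 : 0 ≤ s := Finset.sum_nonneg fun j _ => hy0 j
  have hsn : s ≤ n := by
    calc s ≤ ∑ _j : Fin n, (1:ℝ) := Finset.sum_le_sum fun j _ => hy1 j
      _ = n := by simp
  have hag : ∏ j, y j ≤ (s / n) ^ n := aux_amgm (by omega) y hy0
  rcases le_or_gt s ((n:ℝ) - 2) with hcase | hcase
  · have : (s / n) ^ n ≤ (((n:ℝ) - 2) / n) ^ n := by
      apply pow_le_pow_left₀ (div_nonneg hs0 hnpos.le)
      gcongr
    have hmax : (0:ℝ) ≤ max 0 (s - ((n:ℝ) - 2)) := le_max_left _ _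
    linarith
  · have hb0 : (0:ℝ) ≤ ((n:ℝ) - 2) / n := div_nonneg (by linarith) hnpos.le
    have hba : ((n:ℝ) - 2) / n ≤ s / n := by gcongr
    have ha1 : s / n ≤ 1 := by rw [div_le_one hnpos]; exact hsn
    have key := aux_pow_sub_pow (s / n) (((n:ℝ) - 2) / n) hb0 hba ha1 n
    have hcalc : (n:ℝ) * (s / n - ((n:ℝ) - 2) / n) = s - ((n:ℝ) - 2) := by
      field_simp
    have hmax : max 0 (s - ((n:ℝ) - 2)) = s - ((n:ℝ) - 2) := max_eq_right (by linarith)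
    rw [hmax]
    rw [hcalc] at key
    linarith

lemma aux_side {n : ℕ} (hn : 2 ≤ n) {ι : Type} (t : Finset ι) (w : ι → ℝ) (v : ι → Fin n → ℝ)
    (hw0 : ∀ i ∈ t, 0 ≤ w i) (hw1 : ∑ i ∈ t, w i = 1)
    (hv : ∀ i ∈ t, ∀ j, |v i j| ≤ 1) (σ : ℝ) (hσ : σ = 1 ∨ σ = -1) :
    σ * ∏ j, (∑ i ∈ t, w i * v i j) ≤
      (((n:ℝ) - 2) / n) ^ n + ∑ i ∈ t, w i * (1 + σ * ∏ j, v i j) := by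
  classical
  have hn2 : (2:ℝ) ≤ n := by exact_mod_cast hn
  have hnpos : (0:ℝ) < n := by linarith
  set c : ℝ := (((n:ℝ) - 2) / n) ^ n with hc
  have hc0 : 0 ≤ c := pow_nonneg (div_nonneg (by linarith) hnpos.le) n
  set x : Fin n → ℝ := fun j => ∑ i ∈ t, w i * v i j with hx
  set B : ℝ := ∏ j, x j with hB
  have habsσ : |σ| = 1 := by rcases hσ with h | h <;> simp [h]
  have habsp : ∀ i ∈ t, |∏ j, v i j| ≤ 1 := fun i hi =>
    aux_abs_prod_le_one _ _ (fun j _ => hv i hi j)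
  have hT0 : 0 ≤ ∑ i ∈ t, w i * (1 + σ * ∏ j, v i j) := by
    apply Finset.sum_nonneg
    intro i hi
    apply mul_nonneg (hw0 i hi)
    have : |σ * ∏ j, v i j| ≤ 1 := by
      rw [abs_mul, habsσ, one_mul]; exact habsp i hi
    cases abs_le.mp this; linarith
  by_cases hBc : σ * B ≤ c
  · linarith
  push_neg at hBc
  have hσB : 0 < σ * B := lt_of_le_of_lt hc0 hBc
  have hBne : B ≠ 0 := by
    intro h; rw [h, mul_zero] at hσB; exact lt_irrefl 0 hσB
  set ε : Fin n → ℝ := fun j => if x j < 0 then (-1:ℝ) else 1 with hε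
  have hεx : ∀ j, ε j * x j = |x j| := by
    intro j; by_cases h : x j < 0
    · simp [hε, h, abs_of_neg h]
    · simp [hε, h, abs_of_nonneg (not_lt.mp h)]
  have hεabs : ∀ j, |ε j| = 1 := by
    intro j; by_cases h : x j < 0 <;> simp [hε, h]
  have hεprodx : (∏ j, ε j) * B = |B| := by
    rw [hB, Finset.abs_prod, ← Finset.prod_mul_distrib]
    exact Finset.prod_congr rfl fun j _ => hεx j
  have habsB : |B| = σ * B := by
    rcases hσ with h | h
    · rw [h, one_mul]; rw [h, one_mul] at hσB; exact abs_of_pos hσB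
    · rw [h]; rw [h] at hσB
      have : B < 0 := by nlinarith
      rw [abs_of_neg this]; ring
  have hεprod : ∏ j, ε j = σ := by
    have h2 : (∏ j, ε j) * B = σ * B := by rw [hεprodx, habsB]
    exact mul_right_cancel₀ hBne h2
  -- bounds on |x j|
  have hx1 : ∀ j, |x j| ≤ 1 := by
    intro j
    calc |x j| ≤ ∑ i ∈ t, |w i * v i j| := Finset.abs_sum_le_sum_abs _ _
      _ ≤ ∑ i ∈ t, w i := by
          apply Finset.sum_le_sum
          intro i hi
          rw [abs_mul, abs_of_nonneg (hw0 i hi)]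
          calc w i * |v i j| ≤ w i * 1 := by
                apply mul_le_mul_of_nonneg_left (hv i hi j) (hw0 i hi)
            _ = w i := mul_one _
      _ = 1 := hw1
  -- L4 applied to y = |x|
  have hL4 := aux_L4 hn (fun j => |x j|) (fun j => abs_nonneg _) hx1
  have hprody : ∏ j, |x j| = σ * B := by rw [← habsB, hB, Finset.abs_prod]
  set s : ℝ := ∑ j, |x j| with hsdef
  rw [hprody] at hL4
  have hsge : s - ((n:ℝ) - 2) > 0 := by
    by_contra hcon
    push_neg at hcon
    rw [max_eq_left (by linarith)] at hL4
    linarith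
  rw [max_eq_right (by linarith)] at hL4
  -- pointwise L1
  have hpt : ∀ i ∈ t, 2 - ∑ j, (1 - ε j * v i j) ≤ 1 + σ * ∏ j, v i j := by
    intro i hi
    have h1 : ∀ j : Fin n, j ∈ Finset.univ → |ε j * v i j| ≤ 1 := by
      intro j _
      rw [abs_mul, hεabs j, one_mul]; exact hv i hi j
    have h2 := aux_one_sub_prod_le Finset.univ (fun j => ε j * v i j) h1
    have h3 : ∏ j, (ε j * v i j) = σ * ∏ j, v i j := by
      rw [Finset.prod_mul_distrib, hεprod]
    rw [h3] at h2
    linarith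
  -- sum over i
  have hinner : ∀ j, ∑ i ∈ t, w i * (1 - ε j * v i j) = 1 - ε j * x j := by
    intro j
    have : ∀ i ∈ t, w i * (1 - ε j * v i j) = w i - ε j * (w i * v i j) := by
      intro i _; ring
    rw [Finset.sum_congr rfl this, Finset.sum_sub_distrib, hw1, ← Finset.mul_sum]
  have hswap : ∑ i ∈ t, w i * ∑ j, (1 - ε j * v i j) = ∑ j, (1 - ε j * x j) := by
    calc ∑ i ∈ t, w i * ∑ j, (1 - ε j * v i j)
        = ∑ i ∈ t, ∑ j, w i * (1 - ε j * v i j) := by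
          exact Finset.sum_congr rfl fun i _ => Finset.mul_sum _ _ _
      _ = ∑ j, ∑ i ∈ t, w i * (1 - ε j * v i j) := Finset.sum_comm
      _ = ∑ j, (1 - ε j * x j) := Finset.sum_congr rfl fun j _ => hinner j
  have hsumepsx : ∑ j, (1 - ε j * x j) = (n:ℝ) - s := by
    rw [Finset.sum_sub_distrib]
    simp only [Finset.sum_const, Finset.card_univ, Fintype.card_fin, nsmul_eq_mul, mul_one]
    rw [hsdef]
    congr 1
    exact Finset.sum_congr rfl fun j _ => hεx j
  have hmain : 2 - ((n:ℝ) - s) ≤ ∑ i ∈ t, w i * (1 + σ * ∏ j, v i j) := by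
    have h1 : ∑ i ∈ t, w i * (2 - ∑ j, (1 - ε j * v i j)) ≤
        ∑ i ∈ t, w i * (1 + σ * ∏ j, v i j) := by
      apply Finset.sum_le_sum
      intro i hi
      exact mul_le_mul_of_nonneg_left (hpt i hi) (hw0 i hi)
    have h2 : ∑ i ∈ t, w i * (2 - ∑ j, (1 - ε j * v i j)) = 2 - ((n:ℝ) - s) := by
      have : ∀ i ∈ t, w i * (2 - ∑ j, (1 - ε j * v i j)) =
          2 * w i - w i * ∑ j, (1 - ε j * v i j) := by intro i _; ring
      rw [Finset.sum_congr rfl this, Finset.sum_sub_distrib, ← Finset.mul_sum, hw1, hswap,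
        hsumepsx]
      ring
    linarith
  linarith

lemma aux_core {n : ℕ} (hn : 2 ≤ n) {ι : Type} (t : Finset ι) (w : ι → ℝ) (v : ι → Fin n → ℝ)
    (hw0 : ∀ i ∈ t, 0 ≤ w i) (hw1 : ∑ i ∈ t, w i = 1)
    (hv : ∀ i ∈ t, ∀ j, |v i j| ≤ 1) :
    |(∑ i ∈ t, w i * ∏ j, v i j) - ∏ j, (∑ i ∈ t, w i * v i j)| ≤
      1 + (((n:ℝ) - 2) / n) ^ n := by
  have hplus := aux_side hn t w v hw0 hw1 hv 1 (Or.inl rfl)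
  have hminus := aux_side hn t w v hw0 hw1 hv (-1) (Or.inr rfl)
  have hsplit : ∀ σ : ℝ, ∑ i ∈ t, w i * (1 + σ * ∏ j, v i j)
      = 1 + σ * ∑ i ∈ t, w i * ∏ j, v i j := by
    intro σ
    have : ∀ i ∈ t, w i * (1 + σ * ∏ j, v i j) = w i + σ * (w i * ∏ j, v i j) := by
      intro i _; ring
    rw [Finset.sum_congr rfl this, Finset.sum_add_distrib, hw1, ← Finset.mul_sum]
  rw [hsplit] at hplus hminus
  rw [abs_le]
  constructor <;> linarith

/-- Convex hull error of the multilinear monomial over the symmetric box `[-1,1]^n`. -/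
theorem stmt6 (n : ℕ) (hn : 2 ≤ n) :
    IsGreatest ((fun p : (Fin n → ℝ) × ℝ => |p.2 - ∏ j, p.1 j|) ''
        convexHull ℝ {p : (Fin n → ℝ) × ℝ |
          p.1 ∈ Set.Icc (-1 : Fin n → ℝ) 1 ∧ p.2 = ∏ j, p.1 j})
      (1 + (((n : ℝ) - 2) / n) ^ n) ∧
    ((fun _ => ((n : ℝ) - 2) / n, (-1 : ℝ)) ∈ convexHull ℝ {p : (Fin n → ℝ) × ℝ |
        p.1 ∈ Set.Icc (-1 : Fin n → ℝ) 1 ∧ p.2 = ∏ j, p.1 j} ∧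
      |(-1 : ℝ) - ∏ _j : Fin n, ((n : ℝ) - 2) / n| = 1 + (((n : ℝ) - 2) / n) ^ n) := by
  classical
  have hn2 : (2:ℝ) ≤ n := by exact_mod_cast hn
  have hnpos : (0:ℝ) < n := by linarith
  have hnne : (n:ℝ) ≠ 0 := hnpos.ne'
  set c : ℝ := (((n:ℝ) - 2) / n) ^ n with hc
  have hc0 : 0 ≤ c := pow_nonneg (div_nonneg (by linarith) hnpos.le) n
  set S : Set ((Fin n → ℝ) × ℝ) := {p : (Fin n → ℝ) × ℝ |
      p.1 ∈ Set.Icc (-1 : Fin n → ℝ) 1 ∧ p.2 = ∏ j, p.1 j} with hS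
  -- value at the special point
  have hval : |(-1 : ℝ) - ∏ _j : Fin n, ((n : ℝ) - 2) / n| = 1 + c := by
    rw [Finset.prod_const, Finset.card_univ, Fintype.card_fin, ← hc,
      abs_of_nonpos (by linarith)]
    ring
  -- membership of the special point
  set z : Fin n → (Fin n → ℝ) × ℝ :=
    fun i => (fun j => if j = i then (-1:ℝ) else 1, (-1:ℝ)) with hz
  have hzS : ∀ i ∈ Finset.univ, z i ∈ S := by
    intro i _
    refine ⟨⟨fun j => ?_, fun j => ?_⟩, ?_⟩
    · by_cases h : j = i <;> simp [hz, h]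
    · by_cases h : j = i <;> simp [hz, h]
    · show (-1:ℝ) = ∏ j, (if j = i then (-1:ℝ) else 1)
      rw [Finset.prod_ite_eq' Finset.univ i (fun _ => (-1:ℝ))]
      simp
  have hcmass : Finset.univ.centerMass (fun _ : Fin n => (1:ℝ)) z
      ∈ convexHull ℝ S := by
    apply Finset.centerMass_mem_convexHull _ (fun i _ => zero_le_one) _ hzS
    simp [Finset.card_univ]
    omega
  have hcmeq : Finset.univ.centerMass (fun _ : Fin n => (1:ℝ)) z
      = ((fun _ => ((n : ℝ) - 2) / n, (-1 : ℝ)) : (Fin n → ℝ) × ℝ) := by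
    rw [Finset.centerMass]
    simp only [Finset.sum_const, Finset.card_univ, Fintype.card_fin, nsmul_eq_mul, mul_one,
      one_smul]
    have hsum1 : ∀ j, (∑ i, z i).1 j = (n:ℝ) - 2 := by
      intro j
      rw [Prod.fst_sum, Finset.sum_apply]
      have hterm : ∀ i : Fin n, (z i).1 j = (if i = j then (-2:ℝ) else 0) + 1 := by
        intro i
        show (if j = i then (-1:ℝ) else 1) = _
        by_cases h : i = j
        · subst h; norm_num
        · have h' : ¬ j = i := fun hh => h hh.symm
          simp [h, h']
      rw [Finset.sum_congr rfl (fun i _ => hterm i), Finset.sum_add_distrib,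
        Finset.sum_ite_eq' Finset.univ j (fun _ => (-2:ℝ))]
      simp only [Finset.mem_univ, if_true, Finset.sum_const, Finset.card_univ,
        Fintype.card_fin, nsmul_eq_mul, mul_one]
      ring
    have hsum2 : (∑ i, z i).2 = -(n:ℝ) := by
      rw [Prod.snd_sum]
      show ∑ _i : Fin n, (-1:ℝ) = -(n:ℝ)
      simp
    apply Prod.ext
    · show (n:ℝ)⁻¹ • (∑ i, z i).1 = fun _ => ((n:ℝ) - 2) / n
      funext j
      show (n:ℝ)⁻¹ * (∑ i, z i).1 j = ((n:ℝ) - 2) / n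
      rw [hsum1 j]
      field_simp
    · show (n:ℝ)⁻¹ * (∑ i, z i).2 = -1
      rw [hsum2]
      field_simp
  have hmem : ((fun _ => ((n : ℝ) - 2) / n, (-1 : ℝ)) : (Fin n → ℝ) × ℝ)
      ∈ convexHull ℝ S := hcmeq ▸ hcmass
  refine ⟨⟨⟨_, hmem, hval⟩, ?_⟩, hmem, hval⟩
  -- upper bound
  rintro val ⟨p, hp, rfl⟩
  rw [_root_.convexHull_eq] at hp
  obtain ⟨ι, t, wt, zt, hw0, hw1, hzt, hcm⟩ := hp
  have hcm' : ∑ i ∈ t, wt i • zt i = p := by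
    rw [← Finset.centerMass_eq_of_sum_1 _ _ hw1]; exact hcm
  have hp1 : ∀ j, p.1 j = ∑ i ∈ t, wt i * (zt i).1 j := by
    intro j
    rw [← hcm', Prod.fst_sum, Finset.sum_apply]
    exact Finset.sum_congr rfl fun i _ => rfl
  have hp2 : p.2 = ∑ i ∈ t, wt i * ∏ j, (zt i).1 j := by
    rw [← hcm', Prod.snd_sum]
    refine Finset.sum_congr rfl fun i hi => ?_
    have h2 := (hzt i hi).2
    show wt i * (zt i).2 = _
    rw [h2]
  have hv : ∀ i ∈ t, ∀ j, |(zt i).1 j| ≤ 1 := by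
    intro i hi j
    have h1 := (hzt i hi).1
    rw [Set.mem_Icc] at h1
    rw [abs_le]
    exact ⟨h1.1 j, h1.2 j⟩
  have := aux_core hn t wt (fun i => (zt i).1) hw0 hw1 hv
  have heq : ∏ j, p.1 j = ∏ j, (∑ i ∈ t, wt i * (zt i).1 j) :=
    Finset.prod_congr rfl fun j _ => hp1 j
  show |p.2 - ∏ j, p.1 j| ≤ 1 + c
  rw [hp2, heq]
  exact this

end AuxStmt6
end

section
/- Let n ≥ 1 be odd. Then the convex hull of G_{[−1,1]^n} equals the polytope { (x,w) ∈ [−1,1]^n × [−1,1] : for every subset I ⊆ {1,…,n} of even cardinality, −(n−1) ≤ Σ_{i∈I} x_i − Σ_{i∉I} x_i + w ≤ n−1 }. -/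
/-!
Write a point of `ℝⁿ × ℝ` as `y : Option (Fin n) → ℝ`, with `w` in the coordinate `none`.
The points of the graph over `{±1}ⁿ` are then the sign vectors with an even number of `-1`
entries, and the polytope of the statement is the parity polytope: `|yₒ| ≤ 1`, and `σ ⬝ᵥ y ≤ n - 1`
for every sign vector `σ` with an odd number of `-1` entries (for odd `n` these are exactly the
inequalities indexed by the even sets `I`). The whole graph satisfies these inequalities because
`∑ zᵢ - ∏ zᵢ ≤ n - 1` on `[-1,1]ⁿ`. Conversely, by Hahn–Banach it suffices that every linear
functional `c` is maximised over the parity polytope at an even sign vector. If the signs of `c`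
are even, this is clear; if they are odd, flipping the sign where `|c|` is smallest loses
`2 min |c|`, and the inequality for the odd sign vector of `c` shows that no point of the
polytope does better.
-/

open Finset

theorem Finset.sum_sub_prod_le_card_sub_one {ι : Type*} (s : Finset ι) (y : ι → ℝ)
    (hy : ∀ i ∈ s, |y i| ≤ 1) :
    ∑ i ∈ s, y i - ∏ i ∈ s, y i ≤ #s - 1 := by
  induction s using Finset.cons_induction with
  | empty => simp
  | cons a s ha ih =>
    have hprod : |∏ i ∈ s, y i| ≤ 1 := by
      rw [abs_prod]
      exact prod_le_one (fun i _ => abs_nonneg _) fun i hi => hy i (mem_cons_of_mem hi)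
    have ihs := ih fun i hi => hy i (mem_cons_of_mem hi)
    -- `a + Σ - a P = (Σ - P) + 1 + (a - 1) (1 - P)`, and the last term is `≤ 0`.
    have hcross := mul_le_mul_of_nonneg_right (abs_le.1 (hy a (mem_cons_self a s))).2
      (sub_nonneg.2 (abs_le.1 hprod).2)
    rw [sum_cons, prod_cons, card_cons]
    push_cast
    linarith

theorem Finset.sum_mul_le_sum_sub_two_mul {ι : Type*} (s : Finset ι) (a y : ι → ℝ)
    (ha : ∀ i ∈ s, 0 ≤ a i) (hy : ∀ i ∈ s, y i ≤ 1) {k : ι} (hk : k ∈ s)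
    (hmin : ∀ i ∈ s, a k ≤ a i) (hsum : ∑ i ∈ s, y i ≤ #s - 2) :
    ∑ i ∈ s, a i * y i ≤ ∑ i ∈ s, a i - 2 * a k := by
  have hsplit : ∑ i ∈ s, a i * y i ≤ ∑ i ∈ s, (a k * y i + (a i - a k)) :=
    sum_le_sum fun i hi => by nlinarith [hmin i hi, hy i hi]
  rw [sum_add_distrib, ← mul_sum, sum_sub_distrib, sum_const, nsmul_eq_mul] at hsplit
  nlinarith [mul_le_mul_of_nonneg_left hsum (ha k hk)]

section SignVec

variable {ι : Type*} [DecidableEq ι]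

def signVec (S : Finset ι) (i : ι) : ℝ := if i ∈ S then -1 else 1

@[simp]
lemma signVec_of_mem {S : Finset ι} {i : ι} (h : i ∈ S) : signVec S i = -1 := if_pos h

@[simp]
lemma signVec_of_notMem {S : Finset ι} {i : ι} (h : i ∉ S) : signVec S i = 1 := if_neg h

lemma signVec_mul_self (S : Finset ι) (i : ι) : signVec S i * signVec S i = 1 := by
  unfold signVec; split_ifs <;> norm_num

lemma abs_signVec (S : Finset ι) (i : ι) : |signVec S i| = 1 := by
  unfold signVec; split_ifs <;> norm_num

lemma signVec_symmDiff (S T : Finset ι) (i : ι) :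
    signVec (symmDiff S T) i = signVec S i * signVec T i := by
  unfold signVec; by_cases hS : i ∈ S <;> by_cases hT : i ∈ T <;> simp [mem_symmDiff, hS, hT]

variable [Fintype ι]

lemma prod_signVec (S : Finset ι) : ∏ i, signVec S i = (-1) ^ #S := by
  simp [signVec]

lemma signVec_dotProduct (S : Finset ι) (x : ι → ℝ) :
    signVec S ⬝ᵥ x = ∑ i ∈ Sᶜ, x i - ∑ i ∈ S, x i := by
  simp only [dotProduct, signVec, ite_mul, neg_one_mul, one_mul, sum_ite, filter_mem_eq_inter,
    univ_inter, filter_not, sum_neg_distrib]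
  rw [← compl_eq_univ_sdiff]; ring

def parityPolytope (ι : Type*) [Fintype ι] [DecidableEq ι] : Set (ι → ℝ) :=
  Set.Icc (-1) 1 ∩ ⋂ (S : Finset ι) (_ : Odd #S), {y | signVec S ⬝ᵥ y ≤ Fintype.card ι - 2}

lemma convex_parityPolytope : Convex ℝ (parityPolytope ι) :=
  (convex_Icc _ _).inter <| convex_iInter fun _ => convex_iInter fun _ =>
    convex_halfSpace_le ⟨dotProduct_add _, fun c _ => dotProduct_smul c _ _⟩ _

lemma mem_parityPolytope {y : ι → ℝ} :
    y ∈ parityPolytope ι ↔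
      (∀ i, |y i| ≤ 1) ∧ ∀ S : Finset ι, Odd #S → signVec S ⬝ᵥ y ≤ Fintype.card ι - 2 := by
  simp [parityPolytope, Set.mem_Icc, Pi.le_def, abs_le, forall_and]

theorem exists_even_card_dotProduct_le {y : ι → ℝ} (hy : y ∈ parityPolytope ι) (c : ι → ℝ) :
    ∃ S : Finset ι, Even #S ∧ c ⬝ᵥ y ≤ c ⬝ᵥ signVec S := by
  obtain ⟨hy_abs, hy_odd⟩ := mem_parityPolytope.1 hy
  set S₀ := univ.filter fun i => c i < 0
  have hsign : ∀ i, c i * signVec S₀ i = |c i| := by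
    intro i
    by_cases h : c i < 0
    · simp [S₀, signVec, h, abs_of_neg h]
    · simp [S₀, signVec, h, abs_of_nonneg (not_lt.1 h)]
  set z := fun i => signVec S₀ i * y i
  have hz : ∀ i, z i ≤ 1 := fun i =>
    (le_abs_self _).trans (by rw [abs_mul, abs_signVec, one_mul]; exact hy_abs i)
  have hcy : c ⬝ᵥ y = ∑ i, |c i| * z i := by
    refine sum_congr rfl fun i _ => ?_
    rw [← hsign]
    linear_combination (c i * y i) * (signVec_mul_self S₀ i).symm
  rcases Nat.even_or_odd #S₀ with heven | hodd
  · refine ⟨S₀, heven, ?_⟩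
    rw [hcy, dotProduct, sum_congr rfl fun i _ => hsign i]
    exact sum_le_sum fun i _ => mul_le_of_le_one_right (abs_nonneg _) (hz i)
  obtain ⟨i₀, -⟩ := card_pos.1 hodd.pos
  obtain ⟨k, -, hk⟩ := exists_min_image univ (fun i => |c i|) ⟨i₀, mem_univ _⟩
  refine ⟨symmDiff S₀ {k}, ?_, ?_⟩
  · have hprod := prod_signVec (symmDiff S₀ {k})
    simp only [signVec_symmDiff, prod_mul_distrib, prod_signVec, hodd.neg_one_pow,
      card_singleton, pow_one, neg_one_mul, neg_neg] at hprod
    exact (neg_one_pow_eq_one_iff_even (by norm_num)).1 hprod.symm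
  · have hflip : c ⬝ᵥ signVec (symmDiff S₀ {k}) = ∑ i, |c i| - 2 * |c k| := by
      have : c ⬝ᵥ signVec (symmDiff S₀ {k}) = signVec {k} ⬝ᵥ fun i => |c i| := by
        rw [dotProduct_comm]
        refine sum_congr rfl fun i _ => ?_
        dsimp only
        rw [signVec_symmDiff, ← hsign i]; ring
      rw [this, signVec_dotProduct, ← sum_compl_add_sum {k}, sum_singleton]; ring
    have hz_sum : ∑ i, z i ≤ #(univ : Finset ι) - 2 := by
      rw [card_univ]; exact hy_odd S₀ hodd
    rw [hcy, hflip]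
    exact sum_mul_le_sum_sub_two_mul univ _ z (fun i _ => abs_nonneg _) (fun i _ => hz i)
      (mem_univ k) (fun i _ => hk i (mem_univ i)) hz_sum

theorem parityPolytope_subset_convexHull :
    parityPolytope ι ⊆ convexHull ℝ (signVec '' {S : Finset ι | Even #S}) := by
  intro y hy
  by_contra hy_out
  obtain ⟨f, u, hf_hull, hf_y⟩ := geometric_hahn_banach_closed_point (convex_convexHull ℝ _)
    (((Set.toFinite _).image _).isClosed_convexHull (𝕜 := ℝ)) hy_out
  set c : ι → ℝ := fun i => f fun j => if i = j then 1 else 0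
  have hf : ∀ z, f z = c ⬝ᵥ z := fun z => by
    rw [← ContinuousLinearMap.coe_coe, LinearMap.pi_apply_eq_sum_univ, dotProduct_comm]; rfl
  obtain ⟨S, hS, hle⟩ := exists_even_card_dotProduct_le hy c
  have := hf_hull _ (subset_convexHull ℝ _ ⟨S, hS, rfl⟩)
  rw [hf] at this hf_y
  linarith

end SignVec

section OptionEquivProd

variable {ι : Type*}

def optionEquivProd (ι : Type*) : (Option ι → ℝ) ≃ₗ[ℝ] (ι → ℝ) × ℝ :=
  (LinearEquiv.piOptionEquivProd ℝ).trans (LinearEquiv.prodComm ℝ ℝ (ι → ℝ))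

@[simp]
lemma optionEquivProd_symm_apply_none (p : (ι → ℝ) × ℝ) :
    (optionEquivProd ι).symm p none = p.2 :=
  rfl

@[simp]
lemma optionEquivProd_symm_apply_some (p : (ι → ℝ) × ℝ) (i : ι) :
    (optionEquivProd ι).symm p (some i) = p.1 i :=
  rfl

end OptionEquivProd

section MonomialGraph

variable {ι : Type*} [Fintype ι]

def monomialGraph (ι : Type*) [Fintype ι] : Set (Option ι → ℝ) :=
  {y | (∀ i, y (some i) ∈ Set.Icc (-1) 1) ∧ y none = ∏ i, y (some i)}

lemma image_monomialGraph :
    optionEquivProd ι '' monomialGraph ι =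
      {p : (ι → ℝ) × ℝ | p.1 ∈ Set.Icc (-1) 1 ∧ p.2 = ∏ j, p.1 j} := by
  ext p
  simp [LinearEquiv.image_eq_preimage_symm, monomialGraph, Set.mem_Icc, Pi.le_def, forall_and]

variable [DecidableEq ι]

lemma signVec_mem_monomialGraph {S : Finset (Option ι)} (hS : Even #S) :
    signVec S ∈ monomialGraph ι := by
  refine ⟨fun i => abs_le.1 (abs_signVec S (some i)).le, ?_⟩
  have hprod := prod_signVec S
  rw [Fintype.prod_option, hS.neg_one_pow] at hprod
  linear_combination (-signVec S none) * hprod + (∏ i, signVec S (some i)) * signVec_mul_self S none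

lemma monomialGraph_subset_parityPolytope : monomialGraph ι ⊆ parityPolytope (Option ι) := by
  rintro y ⟨hy, hy_none⟩
  have hy_abs : ∀ i, |y (some i)| ≤ 1 := fun i => abs_le.2 (hy i)
  have hy_none_abs : |y none| ≤ 1 := by
    rw [hy_none, abs_prod]
    exact prod_le_one (fun i _ => abs_nonneg _) fun i _ => hy_abs i
  refine mem_parityPolytope.2 ⟨Option.rec hy_none_abs hy_abs, fun S hS => ?_⟩
  set σ := fun i => signVec S (some i)
  have hσ : signVec S none * ∏ i, σ i = -1 := by
    rw [← Fintype.prod_option, prod_signVec, hS.neg_one_pow]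
  have hσσ : (∏ i, σ i) * ∏ i, σ i = 1 := by
    rw [← prod_mul_distrib]; exact prod_eq_one fun i _ => signVec_mul_self S (some i)
  -- With `z i = σ i * y i`, the last coordinate contributes `-∏ z` since `∏ σ = -signVec S none`.
  have key := sum_sub_prod_le_card_sub_one univ (fun i => σ i * y (some i))
    fun i _ => by rw [abs_mul, abs_signVec, one_mul]; exact hy_abs i
  rw [prod_mul_distrib, card_univ] at key
  rw [dotProduct, Fintype.sum_option, hy_none, Fintype.card_option]
  push_cast
  linear_combination key + ((∏ i, σ i) * ∏ i, y (some i)) * hσ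
    - (signVec S none * ∏ i, y (some i)) * hσσ

theorem convexHull_monomialGraph : convexHull ℝ (monomialGraph ι) = parityPolytope (Option ι) :=
  (convexHull_min monomialGraph_subset_parityPolytope convex_parityPolytope).antisymm <|
    parityPolytope_subset_convexHull.trans <| convexHull_mono <|
      Set.image_subset_iff.2 fun _ hS => signVec_mem_monomialGraph hS

lemma signVec_dotProduct_optionEquivProd_symm (S : Finset (Option ι)) (p : (ι → ℝ) × ℝ) :
    signVec S ⬝ᵥ (optionEquivProd ι).symm p =
      signVec S none * p.2 + signVec S.eraseNone ⬝ᵥ p.1 := by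
  simp [dotProduct, Fintype.sum_option, signVec, mem_eraseNone]

lemma forall_odd_card_option_iff (hodd : Odd (Fintype.card ι)) (x : ι → ℝ) (w : ℝ) :
    (∀ S : Finset (Option ι), Odd #S →
        signVec S none * w + signVec S.eraseNone ⬝ᵥ x ≤ Fintype.card ι - 1) ↔
      ∀ I : Finset ι, Even #I →
        -((Fintype.card ι : ℝ) - 1) ≤ ∑ i ∈ I, x i - ∑ i ∈ Iᶜ, x i + w ∧
          ∑ i ∈ I, x i - ∑ i ∈ Iᶜ, x i + w ≤ Fintype.card ι - 1 := by
  constructor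
  · intro h I hI
    have hlow := h (insertNone I) (by rw [card_insertNone]; exact hI.add_one)
    have hup := h (Iᶜ.map Function.Embedding.some)
      (by rw [card_map, card_compl]; exact Nat.Odd.sub_even (card_le_univ I) hodd hI)
    rw [signVec_of_mem none_mem_insertNone, eraseNone_insertNone, signVec_dotProduct] at hlow
    rw [signVec_of_notMem (by simp), eraseNone_map_some, signVec_dotProduct, compl_compl] at hup
    constructor <;> linarith
  · intro h S hS
    by_cases hnone : none ∈ S
    · have hlow := (h S.eraseNone (by
        rw [card_eraseNone_of_mem hnone]; exact Nat.Odd.sub_odd hS odd_one)).1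
      rw [signVec_of_mem hnone, signVec_dotProduct]
      linarith
    · have hup := (h S.eraseNoneᶜ (by
        rw [card_compl, card_eraseNone_of_not_mem hnone]; exact Nat.Odd.sub_odd hodd hS)).2
      rw [signVec_of_notMem hnone, signVec_dotProduct]
      rw [compl_compl] at hup
      linarith

lemma image_parityPolytope (hodd : Odd (Fintype.card ι)) :
    optionEquivProd ι '' parityPolytope (Option ι) =
      {p : (ι → ℝ) × ℝ | p.1 ∈ Set.Icc (-1) 1 ∧ p.2 ∈ Set.Icc (-1) 1 ∧
        ∀ I : Finset ι, Even #I →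
          -((Fintype.card ι : ℝ) - 1) ≤ ∑ i ∈ I, p.1 i - ∑ i ∈ Iᶜ, p.1 i + p.2 ∧
            ∑ i ∈ I, p.1 i - ∑ i ∈ Iᶜ, p.1 i + p.2 ≤ Fintype.card ι - 1} := by
  ext p
  rw [LinearEquiv.image_eq_preimage_symm, Set.mem_preimage, mem_parityPolytope, Set.mem_ofPred_eq,
    ← forall_odd_card_option_iff hodd, ← and_assoc]
  refine and_congr ?_ (forall₂_congr fun S _ => ?_)
  · simp only [Option.forall, abs_le, optionEquivProd_symm_apply_none,
      optionEquivProd_symm_apply_some, Set.mem_Icc, Pi.le_def, Pi.neg_apply, Pi.one_apply,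
      forall_and]
    tauto
  · rw [signVec_dotProduct_optionEquivProd_symm, Fintype.card_option]
    push_cast
    ring_nf

end MonomialGraph

theorem stmt7_general (n : ℕ) (hodd : Odd n) :
    convexHull ℝ {p : (Fin n → ℝ) × ℝ |
        p.1 ∈ Set.Icc (-1 : Fin n → ℝ) 1 ∧ p.2 = ∏ j, p.1 j}
      = {p : (Fin n → ℝ) × ℝ | p.1 ∈ Set.Icc (-1 : Fin n → ℝ) 1 ∧
          p.2 ∈ Set.Icc (-1 : ℝ) 1 ∧
          ∀ I : Finset (Fin n), Even I.card →
            -((n : ℝ) - 1) ≤ (∑ i ∈ I, p.1 i) - (∑ i ∈ Iᶜ, p.1 i) + p.2 ∧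
            (∑ i ∈ I, p.1 i) - (∑ i ∈ Iᶜ, p.1 i) + p.2 ≤ (n : ℝ) - 1} := by
  have h := image_parityPolytope (ι := Fin n) (by rwa [Fintype.card_fin])
  rw [Fintype.card_fin] at h
  rw [← h, ← convexHull_monomialGraph, ← image_monomialGraph]
  exact ((optionEquivProd (Fin n)).toLinearMap.image_convexHull _).symm

/-- Convex hull of the graph of the multilinear monomial over `[-1,1]^n`, `n` odd. -/
theorem stmt7 (n : ℕ) (hn : 1 ≤ n) (hodd : Odd n) :
    convexHull ℝ {p : (Fin n → ℝ) × ℝ |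
        p.1 ∈ Set.Icc (-1 : Fin n → ℝ) 1 ∧ p.2 = ∏ j, p.1 j}
      = {p : (Fin n → ℝ) × ℝ | p.1 ∈ Set.Icc (-1 : Fin n → ℝ) 1 ∧
          p.2 ∈ Set.Icc (-1 : ℝ) 1 ∧
          ∀ I : Finset (Fin n), Even I.card →
            -((n : ℝ) - 1) ≤ (∑ i ∈ I, p.1 i) - (∑ i ∈ Iᶜ, p.1 i) + p.2 ∧
            (∑ i ∈ I, p.1 i) - (∑ i ∈ Iᶜ, p.1 i) + p.2 ≤ (n : ℝ) - 1} :=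
  stmt7_general n hodd
end

section
/- Let n ≥ 2 and let Δ_n = {x ∈ ℝ^n : x_j ≥ 0 for all j, Σ_{j=1}^n x_j ≤ 1}. Then for every x ∈ Δ_n, min_{1≤j≤n} x_j − ∏_{j=1}^n x_j^{α_j} ≤ (∏_j α_j^{α_j})^{1/d}/d − (∏_j α_j^{α_j})/d^d, and the supremum over Δ_n of the left-hand side equals this bound if and only if α_1 = α_2 = ⋯ = α_n. -/
/-!
Let `m = min_j x_j` and `t = simplexMaxRoot α`, so that the claimed bound is `g t` for
`g s = s - s ^ d`. On the simplex `m ≤ 1/n` and `∏ x_j ^ α_j ≥ m ^ d`, so the objective is at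
most `g m`, with equality at the barycentre: the supremum is `g (1/n)` as soon as `g` increases
on `[0, 1/n]`. Weighted AM-GM (weights `α_j / d` at the points `d / α_j`) gives `1/n ≤ t`, with
equality iff all `α_j` agree. Since `n ≥ 2`, `∏ α_j ^ α_j ≤ (d - 1) ^ (d - 1)`, which together
with Bernoulli's inequality gives `d t ^ (d - 1) ≤ 1`, so `g` is strictly increasing on `[0, t]`.
Hence the supremum `g (1/n)` is at most `g t`, with equality iff `1/n = t`.
-/

open Finset

theorem strictMonoOn_sub_pow {d : ℕ} (hd : 2 ≤ d) {b : ℝ} (hb : d * b ^ (d - 1) ≤ 1) :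
    StrictMonoOn (fun s : ℝ => s - s ^ d) (Set.Icc 0 b) := by
  refine strictMonoOn_of_deriv_pos (convex_Icc 0 b) (by fun_prop) fun s hs => ?_
  rw [interior_Icc] at hs
  have hlt : s ^ (d - 1) < b ^ (d - 1) := pow_lt_pow_left₀ hs.2 hs.1.le (by omega)
  rw [((hasDerivAt_id' s).fun_sub (hasDerivAt_pow d s)).deriv]
  have hd0 : (0 : ℝ) < d := by positivity
  nlinarith

theorem Nat.succ_mul_pow_mul_self_le (m : ℕ) : (m + 1) * m ^ (m * m) ≤ (m + 1) ^ (m * m) := by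
  rcases m.eq_zero_or_pos with rfl | hm
  · simp
  have bernoulli := pow_add_mul_le_add_pow (a := m) (b := 1) (Nat.zero_le _) (Nat.zero_le _) (m * m)
  rw [Nat.cast_id, mul_one, mul_assoc, mul_pow_sub_one (by positivity)] at bernoulli
  linarith

theorem Nat.pow_self_mul_pow_self_le_add_sub_one {a b : ℕ} (ha : 1 ≤ a) (hb : 1 ≤ b) :
    a ^ a * b ^ b ≤ (a + b - 1) ^ (a + b - 1) := by
  have bernoulli := pow_add_mul_le_add_pow (a := b) (b := a - 1) (Nat.zero_le _) (Nat.zero_le _) b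
  have hab : a * b ^ b ≤ (a + b - 1) ^ b := by
    calc a * b ^ b = b ^ b + b * b ^ (b - 1) * (a - 1) := by
          rw [mul_pow_sub_one (by omega)]
          nth_rw 1 [show a = 1 + (a - 1) by omega]
          ring
      _ ≤ (a + b - 1) ^ b := by rwa [show a + b - 1 = b + (a - 1) by omega]
  calc a ^ a * b ^ b = a ^ (a - 1) * (a * b ^ b) := by
        rw [← mul_assoc, ← pow_succ, Nat.sub_add_cancel ha]
    _ ≤ (a + b - 1) ^ (a - 1) * (a + b - 1) ^ b := by gcongr; omega
    _ = (a + b - 1) ^ (a + b - 1) := by rw [← pow_add]; congr 1; omega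

theorem Finset.prod_pow_self_le {ι : Type*} {s : Finset ι} (hs : s.Nonempty) {f : ι → ℕ}
    (hf : ∀ i ∈ s, 1 ≤ f i) :
    ∏ i ∈ s, f i ^ f i ≤ (∑ i ∈ s, f i + 1 - #s) ^ (∑ i ∈ s, f i + 1 - #s) := by
  induction hs using Finset.Nonempty.cons_induction with
  | singleton a => simp
  | cons a s ha hs ih =>
    rw [prod_cons, sum_cons, card_cons]
    have hfa : 1 ≤ f a := hf a (mem_cons_self a s)
    have hf' : ∀ i ∈ s, 1 ≤ f i := fun i hi => hf i (mem_cons_of_mem hi)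
    have hcard : #s ≤ ∑ i ∈ s, f i := by simpa using s.card_nsmul_le_sum f 1 hf'
    calc f a ^ f a * ∏ i ∈ s, f i ^ f i
        ≤ f a ^ f a * (∑ i ∈ s, f i + 1 - #s) ^ (∑ i ∈ s, f i + 1 - #s) := by gcongr; exact ih hf'
      _ ≤ _ := Nat.pow_self_mul_pow_self_le_add_sub_one hfa (by omega)
      _ = _ := by congr 1 <;> omega

section MonomialOnSimplex

variable {ι : Type*} [Fintype ι] {α : ι → ℕ} {d : ℕ}

theorem Fintype.card_le_sum_of_one_le (hα : ∀ j, 1 ≤ α j) : Fintype.card ι ≤ ∑ j, α j := by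
  simpa using univ.card_nsmul_le_sum α 1 fun j _ => hα j

theorem sum_pos_of_one_le (hα : ∀ j, 1 ≤ α j) [Nonempty ι] : 0 < ∑ j, α j :=
  sum_pos (fun j _ => hα j) univ_nonempty

theorem prod_pow_self_pow_mul_le (hα : ∀ j, 1 ≤ α j) (hcard : 2 ≤ Fintype.card ι)
    (hd : ∑ j, α j = d) : (∏ j, α j ^ α j) ^ (d - 1) * d ^ d ≤ d ^ (d * (d - 1)) := by
  have : Nonempty ι := Fintype.card_pos_iff.1 (by omega)
  have hcard_le := hd ▸ Fintype.card_le_sum_of_one_le hα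
  have hP : ∏ j, α j ^ α j ≤ (d - 1) ^ (d - 1) := by
    refine (prod_pow_self_le univ_nonempty fun j _ => hα j).trans ?_
    rw [card_univ, hd]
    have hle : d + 1 - Fintype.card ι ≤ d - 1 := by omega
    exact (Nat.pow_le_pow_left hle _).trans (Nat.pow_le_pow_right (by omega) hle)
  obtain ⟨m, rfl⟩ : ∃ m, d = m + 1 := ⟨d - 1, by omega⟩
  rw [Nat.add_sub_cancel] at hP ⊢
  calc (∏ j, α j ^ α j) ^ m * (m + 1) ^ (m + 1)
      ≤ (m ^ m) ^ m * (m + 1) ^ (m + 1) := by gcongr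
    _ = (m + 1) ^ m * ((m + 1) * m ^ (m * m)) := by ring
    _ ≤ (m + 1) ^ m * (m + 1) ^ (m * m) := by gcongr; exact Nat.succ_mul_pow_mul_self_le m
    _ = (m + 1) ^ ((m + 1) * m) := by ring

/-- `simplexMaxRoot α ^ d = ∏ (α j / d) ^ α j` is the maximum of `∏ x j ^ α j` on the simplex. -/
noncomputable def simplexMaxRoot (α : ι → ℕ) : ℝ :=
  (∏ j, (α j : ℝ) ^ α j) ^ ((1 : ℝ) / (∑ j, α j : ℕ)) / (∑ j, α j : ℕ)

theorem simplexMaxRoot_eq (hd : ∑ j, α j = d) :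
    simplexMaxRoot α = (∏ j, (α j : ℝ) ^ α j) ^ ((1 : ℝ) / d) / d := by
  subst hd; rfl

theorem simplexMaxRoot_pos (hα : ∀ j, 1 ≤ α j) [Nonempty ι] : 0 < simplexMaxRoot α := by
  have hP : 0 < ∏ j, (α j : ℝ) ^ α j := prod_pos fun j _ => pow_pos (Nat.cast_pos.2 (hα j)) _
  exact div_pos (Real.rpow_pos_of_pos hP _) (Nat.cast_pos.2 (sum_pos_of_one_le hα))

theorem simplexMaxRoot_pow (hα : ∀ j, 1 ≤ α j) [Nonempty ι] (hd : ∑ j, α j = d) :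
    simplexMaxRoot α ^ d = (∏ j, (α j : ℝ) ^ α j) / (d : ℝ) ^ d := by
  subst hd
  rw [simplexMaxRoot, div_pow, one_div,
    Real.rpow_inv_natCast_pow (by positivity) (sum_pos_of_one_le hα).ne']

theorem mul_simplexMaxRoot_pow_le_one (hα : ∀ j, 1 ≤ α j) (hcard : 2 ≤ Fintype.card ι)
    (hd : ∑ j, α j = d) : (d : ℝ) * simplexMaxRoot α ^ (d - 1) ≤ 1 := by
  have : Nonempty ι := Fintype.card_pos_iff.1 (by omega)
  have hnat := prod_pow_self_pow_mul_le hα hcard hd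
  have hpow := simplexMaxRoot_pow hα hd
  have ht := simplexMaxRoot_pos hα
  obtain ⟨m, rfl⟩ : ∃ m, d = m + 1 := ⟨d - 1, by have := sum_pos_of_one_le hα; omega⟩
  rw [Nat.add_sub_cancel] at hnat ⊢
  refine (pow_le_one_iff_of_nonneg (by positivity) m.succ_ne_zero).1 ?_
  rw [mul_pow, ← pow_mul, mul_comm m, pow_mul, hpow, div_pow, ← pow_mul, mul_div_assoc',
    div_le_one (by positivity)]
  exact_mod_cast (mul_comm _ _).trans_le hnat

theorem prod_div_rpow_eq_inv_simplexMaxRoot (hα : ∀ j, 1 ≤ α j) [Nonempty ι]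
    (hd : ∑ j, α j = d) :
    ∏ j, ((d : ℝ) / α j) ^ ((α j : ℝ) / d) = (simplexMaxRoot α)⁻¹ := by
  subst hd
  set D : ℝ := ((∑ i, α i : ℕ) : ℝ)
  have hD : 0 < D := Nat.cast_pos.2 (sum_pos_of_one_le hα)
  have hnum : ∏ j, D ^ ((α j : ℝ) / D) = D := by
    rw [← Real.rpow_sum_of_pos hD, ← sum_div, ← Nat.cast_sum, div_self hD.ne', Real.rpow_one]
  have hden : ∏ j, (α j : ℝ) ^ ((α j : ℝ) / D) = (∏ j, (α j : ℝ) ^ α j) ^ ((1 : ℝ) / D) := by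
    rw [← Real.finsetProd_rpow _ _ (fun j _ => by positivity)]
    refine prod_congr rfl fun j _ => ?_
    rw [← Real.rpow_natCast_mul (by positivity), mul_one_div]
  rw [prod_congr rfl fun j _ => Real.div_rpow hD.le (Nat.cast_nonneg _) _, prod_div_distrib,
    hnum, hden, simplexMaxRoot, inv_div]

theorem sum_div_eq_one (hα : ∀ j, 1 ≤ α j) [Nonempty ι] (hd : ∑ j, α j = d) :
    ∑ j, (α j : ℝ) / d = 1 := by
  rw [← sum_div, ← Nat.cast_sum, hd, div_self (Nat.cast_ne_zero.2 (hd ▸ sum_pos_of_one_le hα).ne')]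

theorem sum_div_mul_div_eq_card (hα : ∀ j, 1 ≤ α j) [Nonempty ι] (hd : ∑ j, α j = d) :
    ∑ j, (α j : ℝ) / d * (d / α j) = Fintype.card ι := by
  have hD : (d : ℝ) ≠ 0 := Nat.cast_ne_zero.2 (hd ▸ sum_pos_of_one_le hα).ne'
  calc _ = ∑ _j : ι, (1 : ℝ) := sum_congr rfl fun j _ => by
        have : (α j : ℝ) ≠ 0 := Nat.cast_ne_zero.2 (by have := hα j; omega)
        field_simp
    _ = Fintype.card ι := by simp

theorem inv_card_le_simplexMaxRoot (hα : ∀ j, 1 ≤ α j) [Nonempty ι] :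
    (Fintype.card ι : ℝ)⁻¹ ≤ simplexMaxRoot α := by
  have amgm := Real.geom_mean_le_arith_mean_weighted univ
    (fun j => (α j : ℝ) / (∑ i, α i : ℕ)) (fun j => ((∑ i, α i : ℕ) : ℝ) / α j)
    (fun j _ => by positivity) (sum_div_eq_one hα rfl) (fun j _ => by positivity)
  rw [prod_div_rpow_eq_inv_simplexMaxRoot hα rfl, sum_div_mul_div_eq_card hα rfl] at amgm
  exact inv_le_of_inv_le₀ (simplexMaxRoot_pos hα) amgm

theorem inv_card_eq_simplexMaxRoot_iff (hα : ∀ j, 1 ≤ α j) [Nonempty ι] :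
    (Fintype.card ι : ℝ)⁻¹ = simplexMaxRoot α ↔ ∀ i j, α i = α j := by
  have hd := sum_pos_of_one_le hα
  have amgm := Real.geom_mean_eq_arith_mean_weighted_iff_of_pos univ
    (fun j => (α j : ℝ) / (∑ i, α i : ℕ)) (fun j => ((∑ i, α i : ℕ) : ℝ) / α j)
    (fun j _ => div_pos (Nat.cast_pos.2 (hα j)) (Nat.cast_pos.2 hd)) (sum_div_eq_one hα rfl)
    (fun j _ => by positivity)
  rw [prod_div_rpow_eq_inv_simplexMaxRoot hα rfl, sum_div_mul_div_eq_card hα rfl] at amgm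
  rw [inv_eq_iff_eq_inv, eq_comm, amgm]
  have hD : ∑ i, (α i : ℝ) ≠ 0 := by exact_mod_cast hd.ne'
  simp [div_eq_mul_inv, mul_right_inj' hD]

def simplex (ι : Type*) [Fintype ι] : Set (ι → ℝ) := {x | (∀ j, 0 ≤ x j) ∧ ∑ j, x j ≤ 1}

theorem iInf_le_inv_card [Nonempty ι] {x : ι → ℝ} (hx : x ∈ simplex ι) :
    ⨅ j, x j ≤ (Fintype.card ι : ℝ)⁻¹ := by
  have hmin := univ.card_nsmul_le_sum x (⨅ j, x j) fun j _ =>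
    ciInf_le (Set.finite_range x).bddBelow j
  rw [card_univ, nsmul_eq_mul] at hmin
  rw [← one_div, le_div_iff₀ (by positivity)]
  linarith [hx.2]

theorem iInf_sub_prod_pow_le {x : ι → ℝ} (hx : ∀ j, 0 ≤ x j) (hd : ∑ j, α j = d) :
    (⨅ j, x j) - ∏ j, x j ^ α j ≤ (⨅ j, x j) - (⨅ j, x j) ^ d := by
  have hmin := Real.iInf_nonneg hx
  rw [← hd, ← prod_pow_eq_pow_sum]
  exact sub_le_sub_left (prod_le_prod (fun j _ => pow_nonneg hmin _)
    fun j _ => pow_le_pow_left₀ hmin (ciInf_le (Set.finite_range x).bddBelow j) _) _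

theorem isGreatest_image_simplex [Nonempty ι] (hd : ∑ j, α j = d)
    (hmono : MonotoneOn (fun s : ℝ => s - s ^ d) (Set.Icc 0 (Fintype.card ι : ℝ)⁻¹)) :
    IsGreatest ((fun x => (⨅ j, x j) - ∏ j, x j ^ α j) '' simplex ι)
      ((Fintype.card ι : ℝ)⁻¹ - (Fintype.card ι : ℝ)⁻¹ ^ d) := by
  refine ⟨⟨fun _ => (Fintype.card ι : ℝ)⁻¹, ⟨fun _ => by positivity, by simp⟩, ?_⟩, ?_⟩
  · simp [prod_pow_eq_pow_sum, hd]
  · rintro _ ⟨x, hx, rfl⟩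
    have hmin : ⨅ j, x j ∈ Set.Icc 0 (Fintype.card ι : ℝ)⁻¹ :=
      ⟨Real.iInf_nonneg hx.1, iInf_le_inv_card hx⟩
    exact (iInf_sub_prod_pow_le hx.1 hd).trans (hmono hmin ⟨by positivity, le_rfl⟩ hmin.2)

end MonomialOnSimplex

theorem stmt11_general (n : ℕ) (hn : 2 ≤ n) (α : Fin n → ℕ) (hα : ∀ j, 1 ≤ α j)
    (d : ℕ) (hd : d = ∑ j, α j) :
    (∀ x : Fin n → ℝ, (∀ j, 0 ≤ x j) → ∑ j, x j ≤ 1 →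
      (⨅ j, x j) - ∏ j, x j ^ α j ≤
        (∏ j, (α j : ℝ) ^ α j) ^ ((1 : ℝ) / (d : ℝ)) / (d : ℝ)
          - (∏ j, (α j : ℝ) ^ α j) / (d : ℝ) ^ d) ∧
    (sSup ((fun x : Fin n → ℝ => (⨅ j, x j) - ∏ j, x j ^ α j) ''
        {x : Fin n → ℝ | (∀ j, 0 ≤ x j) ∧ ∑ j, x j ≤ 1}) =
        (∏ j, (α j : ℝ) ^ α j) ^ ((1 : ℝ) / (d : ℝ)) / (d : ℝ)
          - (∏ j, (α j : ℝ) ^ α j) / (d : ℝ) ^ d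
      ↔ ∀ i j, α i = α j) := by
  have hcard : 2 ≤ Fintype.card (Fin n) := by rwa [Fintype.card_fin]
  have : Nonempty (Fin n) := Fintype.card_pos_iff.1 (by omega)
  have hd2 : 2 ≤ d := hd ▸ hcard.trans (Fintype.card_le_sum_of_one_le hα)
  rw [← simplexMaxRoot_eq hd.symm, ← simplexMaxRoot_pow hα hd.symm]
  set t := simplexMaxRoot α
  have hg := strictMonoOn_sub_pow hd2 (mul_simplexMaxRoot_pow_le_one hα hcard hd.symm)
  have hinv : (Fintype.card (Fin n) : ℝ)⁻¹ ∈ Set.Icc 0 t :=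
    ⟨by positivity, inv_card_le_simplexMaxRoot hα⟩
  have ht : t ∈ Set.Icc 0 t := Set.right_mem_Icc.2 (hinv.1.trans hinv.2)
  have hmax : IsGreatest ((fun x : Fin n → ℝ => (⨅ j, x j) - ∏ j, x j ^ α j) ''
      {x : Fin n → ℝ | (∀ j, 0 ≤ x j) ∧ ∑ j, x j ≤ 1}) _ :=
    isGreatest_image_simplex hd.symm (hg.monotoneOn.mono (Set.Icc_subset_Icc_right hinv.2))
  refine ⟨fun x hx hsum => (hmax.2 ⟨x, ⟨hx, hsum⟩, rfl⟩).trans (hg.monotoneOn hinv ht hinv.2), ?_⟩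
  rw [hmax.csSup_eq, hg.eq_iff_eq hinv ht, inv_card_eq_simplexMaxRoot_iff hα]

/-- Error of the overestimator `min_j x_j` over the standard simplex, tight iff symmetric. -/
theorem stmt11 (n : ℕ) (hn : 2 ≤ n) (α : Fin n → ℕ) (hα : ∀ j, 1 ≤ α j)
    (d : ℕ) (hd : d = ∑ j, α j) (hd2 : 2 ≤ d) :
    (∀ x : Fin n → ℝ, (∀ j, 0 ≤ x j) → ∑ j, x j ≤ 1 →
      (⨅ j, x j) - ∏ j, x j ^ α j ≤
        (∏ j, (α j : ℝ) ^ α j) ^ ((1 : ℝ) / (d : ℝ)) / (d : ℝ)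
          - (∏ j, (α j : ℝ) ^ α j) / (d : ℝ) ^ d) ∧
    (sSup ((fun x : Fin n → ℝ => (⨅ j, x j) - ∏ j, x j ^ α j) ''
        {x : Fin n → ℝ | (∀ j, 0 ≤ x j) ∧ ∑ j, x j ≤ 1}) =
        (∏ j, (α j : ℝ) ^ α j) ^ ((1 : ℝ) / (d : ℝ)) / (d : ℝ)
          - (∏ j, (α j : ℝ) ^ α j) / (d : ℝ) ^ d
      ↔ ∀ i j, α i = α j) :=
  stmt11_general n hn α hα d hd
end

section
/- Let S be a nonempty compact convex subset of [0,1]^n and let B be a nonempty set of vectors β ∈ ℝ^n with β_j ≥ 1 for all j. For β ∈ B set d_β = Σ_j β_j, σ(β) = d_β + min_{x∈S} ( ∏_j x_j^{α_j} − Σ_j β_j x_j ), and define the convex underestimator f_B(x) = max{ 0, sup_{β∈B} ( σ(β) + Σ_j β_j (x_j − 1) ) }. Suppose there is an index j₀ such that α_{j₀} ≤ β_{j₀} for every β ∈ B. Then for every x ∈ S, ∏_{j=1}^n x_j^{α_j} − f_B(x) ≤ inf_{β∈B} (1 − σ(β)/d_β)^{d_β / r(β,α)}, where r(β,α) = max_{1≤j≤n}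 β_j/α_j. -/
/-!
Fix `β ∈ B` and `x ∈ S`, and put `D = ∑ βᵢ`, `T = ∑ βᵢ xᵢ`, `r = maxᵢ βᵢ / αᵢ`, `q = D / r`,
`u = T / D` and `v = 1 - σ(β) / D`. Since `βᵢ / r ≤ αᵢ` and `xᵢ ≤ 1`, weighted AM-GM gives
`∏ xᵢ ^ αᵢ ≤ ∏ xᵢ ^ (βᵢ / r) ≤ u ^ q`, while `f_B(x) ≥ max 0 (σ(β) + ∑ βᵢ (xᵢ - 1)) = max 0 (D (u - v))`.
If `u ≤ v` the error is at most `u ^ q ≤ v ^ q`; otherwise it is at most `u ^ q - D (u - v) ≤ v ^ q`,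
because `t ↦ t ^ q` is `q`-Lipschitz on `[0, 1]` and `1 ≤ q ≤ D`; here `r ≥ 1` comes from
`α_{j₀} ≤ β_{j₀}`, and `v ≥ 0` since the monomial is at most `x_{j₀} ≤ T`.
-/

open Finset

namespace Real

theorem rpow_sub_rpow_le_mul_sub {u v q : ℝ} (hv : 0 ≤ v) (hvu : v ≤ u) (hu : u ≤ 1)
    (hq : 1 ≤ q) : u ^ q - v ^ q ≤ q * (u - v) := by
  rcases (hv.trans hvu).eq_or_lt with rfl | hu0
  · obtain rfl : v = 0 := le_antisymm hvu hv
    simp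
  have hbernoulli : 1 + q * (v / u - 1) ≤ v ^ q / u ^ q := by
    have := one_add_mul_self_le_rpow_one_add (s := v / u - 1)
      (by linarith [div_nonneg hv hu0.le]) hq
    rwa [add_sub_cancel, div_rpow hv hu0.le] at this
  have hslope : u ^ q / u ≤ 1 := by
    rw [← rpow_sub_one hu0.ne']
    exact rpow_le_one hu0.le hu (by linarith)
  rw [le_div_iff₀ (rpow_pos_of_pos hu0 q)] at hbernoulli
  have hexpand : (1 + q * (v / u - 1)) * u ^ q = u ^ q - q * (u ^ q / u * (u - v)) := by
    field_simp
    ring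
  have : q * (u ^ q / u * (u - v)) ≤ q * (u - v) := by
    gcongr
    exact mul_le_of_le_one_left (sub_nonneg.2 hvu) hslope
  linarith

theorem sub_le_rpow_of_le_rpow_of_max_le {f L u v q D : ℝ} (hu0 : 0 ≤ u) (hu1 : u ≤ 1)
    (hv : 0 ≤ v) (hq : 1 ≤ q) (hqD : q ≤ D) (hf : f ≤ u ^ q) (hL : max 0 (D * (u - v)) ≤ L) :
    f - L ≤ v ^ q := by
  rcases le_total u v with huv | hvu
  · have := rpow_le_rpow hu0 huv (by linarith : 0 ≤ q)
    linarith [le_of_max_le_left hL]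
  · have : q * (u - v) ≤ D * (u - v) := by gcongr
    linarith [le_of_max_le_right hL, rpow_sub_rpow_le_mul_sub hv hvu hu1 hq]

theorem prod_rpow_div_le_weighted_mean_rpow {ι : Type*} (s : Finset ι) {w x : ι → ℝ} {r : ℝ}
    (hw : ∀ i ∈ s, 0 ≤ w i) (hW : 0 < ∑ i ∈ s, w i) (hx : ∀ i ∈ s, 0 ≤ x i) (hr : 0 ≤ r) :
    ∏ i ∈ s, x i ^ (w i / r) ≤
      ((∑ i ∈ s, w i * x i) / ∑ i ∈ s, w i) ^ ((∑ i ∈ s, w i) / r) := by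
  have hprod : 0 ≤ ∏ i ∈ s, x i ^ w i := prod_nonneg fun i hi => rpow_nonneg (hx i hi) _
  calc ∏ i ∈ s, x i ^ (w i / r)
      = ((∏ i ∈ s, x i ^ w i) ^ (∑ i ∈ s, w i)⁻¹) ^ ((∑ i ∈ s, w i) / r) := by
        rw [← rpow_mul hprod, ← mul_div_assoc, inv_mul_cancel₀ hW.ne', ← finsetProd_rpow s _
          (fun i hi => rpow_nonneg (hx i hi) _)]
        exact prod_congr rfl fun i hi => by rw [← rpow_mul (hx i hi), mul_one_div]
    _ ≤ _ := by
        gcongr ?_ ^ _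
        exact geom_mean_le_arith_mean s w x hw hW hx

end Real

open Real

section Monomial

variable {ι : Type*} [Fintype ι] {α : ι → ℕ} {x : ι → ℝ}

theorem prod_pow_le_apply (hx : x ∈ Set.Icc 0 1) {j : ι} (hj : α j ≠ 0) :
    ∏ i, x i ^ α i ≤ x j := by
  classical
  rw [← mul_prod_erase univ _ (mem_univ j)]
  calc x j ^ α j * ∏ i ∈ univ.erase j, x i ^ α i ≤ x j ^ α j * 1 := by
        gcongr
        · exact pow_nonneg (hx.1 j) _
        · exact prod_le_one (fun i _ => pow_nonneg (hx.1 i) _)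
            fun i _ => pow_le_one₀ (hx.1 i) (hx.2 i)
    _ ≤ x j := by rw [mul_one]; exact pow_le_of_le_one (hx.1 j) (hx.2 j) hj

theorem prod_pow_le_weighted_mean_rpow (hx : x ∈ Set.Icc 0 1) {β : ι → ℝ} {r : ℝ}
    (hβ : ∀ i, 0 ≤ β i) (hβsum : 0 < ∑ i, β i) (hr : 0 < r) (hβα : ∀ i, β i ≤ r * α i) :
    ∏ i, x i ^ α i ≤ ((∑ i, β i * x i) / ∑ i, β i) ^ ((∑ i, β i) / r) :=
  calc ∏ i, x i ^ α i ≤ ∏ i, x i ^ (β i / r) := by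
        gcongr with i
        · exact fun i _ => pow_nonneg (hx.1 i) _
        · rw [← rpow_natCast]
          exact rpow_le_rpow_of_exponent_ge' (hx.1 i) (hx.2 i) (div_nonneg (hβ i) hr.le)
            ((div_le_iff₀' hr).2 (hβα i))
    _ ≤ _ := prod_rpow_div_le_weighted_mean_rpow univ (fun i _ => hβ i) hβsum
        (fun i _ => hx.1 i) hr.le

theorem bddBelow_image_prod_pow_sub_sum_mul {S : Set (ι → ℝ)} (hS : S ⊆ Set.Icc 0 1)
    (α : ι → ℕ) {β : ι → ℝ} (hβ : ∀ i, 0 ≤ β i) :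
    BddBelow ((fun y => ∏ i, y i ^ α i - ∑ i, β i * y i) '' S) := by
  refine ⟨-∑ i, β i, ?_⟩
  rintro _ ⟨y, hy, rfl⟩
  have hprod : 0 ≤ ∏ i, y i ^ α i := prod_nonneg fun i _ => pow_nonneg ((hS hy).1 i) _
  have hsum : ∑ i, β i * y i ≤ ∑ i, β i :=
    sum_le_sum fun i _ => mul_le_of_le_one_right (hβ i) ((hS hy).2 i)
  simp only
  linarith

end Monomial

section Underestimator

variable {ι : Type*} [Fintype ι] {S : Set (ι → ℝ)} {α : ι → ℕ} {β x : ι → ℝ}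

/-- The constant `σ(β)` of the paper: `x ↦ σ(β) + ∑ i, β i * (x i - 1)` is the largest affine
minorant with slope `β` of the monomial on `S`. -/
noncomputable def underestimatorOffset (S : Set (ι → ℝ)) (α : ι → ℕ) (β : ι → ℝ) : ℝ :=
  ∑ i, β i + sInf ((fun y => ∏ i, y i ^ α i - ∑ i, β i * y i) '' S)

theorem underestimatorOffset_add_le (hS : S ⊆ Set.Icc 0 1) (hβ : ∀ i, 0 ≤ β i) (hx : x ∈ S) :
    underestimatorOffset S α β + ∑ i, β i * (x i - 1) ≤ ∏ i, x i ^ α i := by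
  have hinf := csInf_le (bddBelow_image_prod_pow_sub_sum_mul hS α hβ) ⟨x, hx, rfl⟩
  simp only [underestimatorOffset, mul_sub, mul_one, sum_sub_distrib] at hinf ⊢
  linarith

theorem prod_pow_sub_le_rpow_of_underestimatorOffset (hS : S ⊆ Set.Icc 0 1)
    (hα : ∀ i, 1 ≤ α i) (hβ : ∀ i, 1 ≤ β i) {j₀ : ι} (hj₀ : (α j₀ : ℝ) ≤ β j₀) (hx : x ∈ S)
    {L : ℝ} (hL : max 0 (underestimatorOffset S α β + ∑ i, β i * (x i - 1)) ≤ L) :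
    ∏ i, x i ^ α i - L ≤
      (1 - underestimatorOffset S α β / ∑ i, β i) ^ ((∑ i, β i) / ⨆ i, β i / (α i : ℝ)) := by
  set σ := underestimatorOffset S α β
  set D := ∑ i, β i
  set T := ∑ i, β i * x i
  set r := ⨆ i, β i / (α i : ℝ)
  have hx01 := hS hx
  have hβ0 : ∀ i, 0 ≤ β i := fun i => zero_le_one.trans (hβ i)
  have hα0 : ∀ i, (0 : ℝ) < α i := fun i => by exact_mod_cast hα i
  have hβD : ∀ i, β i ≤ D := fun i => single_le_sum (fun i _ => hβ0 i) (mem_univ i)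
  have hD : 0 < D := zero_lt_one.trans_le ((hβ j₀).trans (hβD j₀))
  have hle_r : ∀ i, β i / α i ≤ r := le_ciSup (Set.finite_range _).bddAbove
  have hβr : ∀ i, β i ≤ r * α i := fun i => (div_le_iff₀ (hα0 i)).1 (hle_r i)
  have hr : 1 ≤ r := ((one_le_div (hα0 j₀)).2 hj₀).trans (hle_r j₀)
  have : Nonempty ι := ⟨j₀⟩
  have hrD : r ≤ D := ciSup_le fun i =>
    (div_le_self (hβ0 i) (by exact_mod_cast hα i)).trans (hβD i)
  have hsum : ∑ i, β i * (x i - 1) = T - D := by simp only [mul_sub, mul_one, sum_sub_distrib, T, D]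
  have hfT : ∏ i, x i ^ α i ≤ T := calc
    ∏ i, x i ^ α i ≤ x j₀ := prod_pow_le_apply hx01 (Nat.one_le_iff_ne_zero.mp (hα j₀))
    _ ≤ β j₀ * x j₀ := le_mul_of_one_le_left (hx01.1 j₀) (hβ j₀)
    _ ≤ T := single_le_sum (f := fun i => β i * x i)
      (fun i _ => mul_nonneg (hβ0 i) (hx01.1 i)) (mem_univ j₀)
  have hσ := underestimatorOffset_add_le (α := α) hS hβ0 hx
  refine sub_le_rpow_of_le_rpow_of_max_le (u := T / D) (D := D)
    (div_nonneg (sum_nonneg fun i _ => mul_nonneg (hβ0 i) (hx01.1 i)) hD.le)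
    (div_le_one_of_le₀ (sum_le_sum fun i _ => mul_le_of_le_one_right (hβ0 i) (hx01.2 i)) hD.le)
    (sub_nonneg.2 ((div_le_one hD).2 (by linarith))) ((one_le_div (by linarith)).2 hrD)
    (div_le_self hD.le hr) (prod_pow_le_weighted_mean_rpow hx01 hβ0 hD (by linarith) hβr) ?_
  convert hL using 2
  field_simp
  linarith

end Underestimator

theorem stmt13_general (n : ℕ) (α : Fin n → ℕ) (hα : ∀ j, 1 ≤ α j)
    (S : Set (Fin n → ℝ)) (hSsub : S ⊆ Set.Icc 0 1)
    (B : Set (Fin n → ℝ)) (hB : B.Nonempty) (hB1 : ∀ β ∈ B, ∀ j, 1 ≤ β j)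
    (dβ : (Fin n → ℝ) → ℝ) (hdβ : ∀ β, dβ β = ∑ j, β j)
    (sig : (Fin n → ℝ) → ℝ)
    (hsig : ∀ β, sig β = dβ β +
      sInf ((fun x : Fin n → ℝ => (∏ j, x j ^ α j) - ∑ j, β j * x j) '' S))
    (fB : (Fin n → ℝ) → ℝ)
    (hfB : ∀ x, fB x = max 0
      (⨆ β : B, (sig β + ∑ j, (β : Fin n → ℝ) j * (x j - 1))))
    (rr : (Fin n → ℝ) → ℝ) (hrr : ∀ β, rr β = ⨆ j, β j / (α j : ℝ))
    (j₀ : Fin n) (hj₀ : ∀ β ∈ B, (α j₀ : ℝ) ≤ β j₀) :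
    ∀ x ∈ S, (∏ j, x j ^ α j) - fB x ≤
      ⨅ β : B, (1 - sig β / dβ β) ^ (dβ β / rr β) := by
  intro x hx
  have : Nonempty B := hB.to_subtype
  have hsig_eq : ∀ β, sig β = underestimatorOffset S α β := fun β => by rw [hsig, hdβ]; rfl
  have hminorant : ∀ β : B, sig β + ∑ j, (β : Fin n → ℝ) j * (x j - 1) ≤ ∏ j, x j ^ α j :=
    fun β => by
      rw [hsig_eq]
      exact underestimatorOffset_add_le hSsub (fun j => zero_le_one.trans (hB1 β β.2 j)) hx
  refine le_ciInf fun ⟨β, hβ⟩ => ?_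
  rw [hsig_eq, hdβ, hrr]
  refine prod_pow_sub_le_rpow_of_underestimatorOffset hSsub hα (hB1 β hβ) (hj₀ β hβ) hx ?_
  rw [hfB, ← hsig_eq]
  exact max_le_max le_rfl (le_ciSup ⟨_, Set.forall_mem_range.2 hminorant⟩ ⟨β, hβ⟩)

/-- Error bound for a convex underestimator given as a pointwise supremum of linear
underestimators of the monomial over `S ⊆ [0,1]^n`. -/
theorem stmt13 (n : ℕ) (hn : 1 ≤ n) (α : Fin n → ℕ) (hα : ∀ j, 1 ≤ α j)
    (d : ℕ) (hd : d = ∑ j, α j) (hd2 : 2 ≤ d)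
    (S : Set (Fin n → ℝ)) (hS : S.Nonempty) (hScompact : IsCompact S)
    (hSconvex : Convex ℝ S) (hSsub : S ⊆ Set.Icc 0 1)
    (B : Set (Fin n → ℝ)) (hB : B.Nonempty) (hB1 : ∀ β ∈ B, ∀ j, 1 ≤ β j)
    (dβ : (Fin n → ℝ) → ℝ) (hdβ : ∀ β, dβ β = ∑ j, β j)
    (sig : (Fin n → ℝ) → ℝ)
    (hsig : ∀ β, sig β = dβ β +
      sInf ((fun x : Fin n → ℝ => (∏ j, x j ^ α j) - ∑ j, β j * x j) '' S))
    (fB : (Fin n → ℝ) → ℝ)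
    (hfB : ∀ x, fB x = max 0
      (⨆ β : B, (sig β + ∑ j, (β : Fin n → ℝ) j * (x j - 1))))
    (rr : (Fin n → ℝ) → ℝ) (hrr : ∀ β, rr β = ⨆ j, β j / (α j : ℝ))
    (j₀ : Fin n) (hj₀ : ∀ β ∈ B, (α j₀ : ℝ) ≤ β j₀) :
    ∀ x ∈ S, (∏ j, x j ^ α j) - fB x ≤
      ⨅ β : B, (1 - sig β / dβ β) ^ (dβ β / rr β) :=
  stmt13_general n α hα S hSsub B hB hB1 dβ hdβ sig hsig fB hfB rr hrr j₀ hj₀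
end

section
/- Let s ∈ [0,1)^n and define γ ∈ ℝ^n by γ_j = (1 − (1 − s_j)^{α_j})/s_j if s_j > 0 and γ_j = α_j if s_j = 0. Then for every x ∈ [0,1]^n with x_j ≤ 1 − s_j for all j, one has ∏_{j=1}^n x_j^{α_j} ≥ 1 + Σ_{j=1}^n γ_j (x_j − 1). In particular (taking s = 0), ∏_{j=1}^n x_j^{α_j} ≥ 1 + Σ_{j=1}^n α_j (x_j − 1) for all x ∈ [0,1]^n. -/
/-!
Writing `1 - x^k = (1 + x + ⋯ + x^(k-1)) (1 - x)` and bounding each power `x^i ≤ c^i` gives the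
one-variable bound `(∑_{i<k} c^i) (x - 1) ≤ x^k - 1` for `0 ≤ x ≤ min c 1`; for `c = 1 - s` the
geometric sum is exactly `γ`, and for `c = 1` it is `k`. Summing these bounds over the coordinates
and using the Weierstrass inequality `1 + ∑ (y_j - 1) ≤ ∏ y_j` for `y_j = x_j^{α_j} ∈ [0,1]` gives
the claim.
-/

open Finset

section OrderedRing

variable {ι R : Type*} [CommRing R] [LinearOrder R] [IsStrictOrderedRing R]

theorem Finset.one_add_sum_sub_one_le_prod (s : Finset ι) {y : ι → R}
    (h0 : ∀ i ∈ s, 0 ≤ y i) (h1 : ∀ i ∈ s, y i ≤ 1) :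
    1 + ∑ i ∈ s, (y i - 1) ≤ ∏ i ∈ s, y i := by
  induction s using Finset.cons_induction with
  | empty => simp
  | cons a s ha ih =>
    rw [sum_cons, prod_cons]
    have ih := ih (fun i hi ↦ h0 i (mem_cons_of_mem hi)) (fun i hi ↦ h1 i (mem_cons_of_mem hi))
    have hsum : ∑ i ∈ s, (y i - 1) ≤ 0 :=
      sum_nonpos fun i hi ↦ sub_nonpos.2 (h1 i (mem_cons_of_mem hi))
    have ha0 := h0 a (mem_cons_self a s)
    have ha1 := h1 a (mem_cons_self a s)
    nlinarith [mul_le_mul_of_nonneg_left ih ha0]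

theorem geom_sum_mul_sub_one_le_pow_sub_one {x c : R} (hx0 : 0 ≤ x) (hxc : x ≤ c) (hx1 : x ≤ 1)
    (k : ℕ) : (∑ i ∈ range k, c ^ i) * (x - 1) ≤ x ^ k - 1 :=
  calc (∑ i ∈ range k, c ^ i) * (x - 1)
      ≤ (∑ i ∈ range k, x ^ i) * (x - 1) :=
        mul_le_mul_of_nonpos_right (sum_le_sum fun i _ ↦ pow_le_pow_left₀ hx0 hxc i)
          (sub_nonpos.2 hx1)
    _ = x ^ k - 1 := geom_sum_mul x k

theorem one_add_sum_geom_sum_mul_sub_one_le_prod_pow (s : Finset ι) {x c : ι → R} (k : ι → ℕ)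
    (hx0 : ∀ i ∈ s, 0 ≤ x i) (hxc : ∀ i ∈ s, x i ≤ c i) (hx1 : ∀ i ∈ s, x i ≤ 1) :
    1 + ∑ i ∈ s, (∑ m ∈ range (k i), c i ^ m) * (x i - 1) ≤ ∏ i ∈ s, x i ^ k i :=
  calc 1 + ∑ i ∈ s, (∑ m ∈ range (k i), c i ^ m) * (x i - 1)
      ≤ 1 + ∑ i ∈ s, (x i ^ k i - 1) := by
        gcongr with i hi
        exact geom_sum_mul_sub_one_le_pow_sub_one (hx0 i hi) (hxc i hi) (hx1 i hi) (k i)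
    _ ≤ ∏ i ∈ s, x i ^ k i :=
        s.one_add_sum_sub_one_le_prod (fun i hi ↦ pow_nonneg (hx0 i hi) _)
          (fun i hi ↦ pow_le_one₀ (hx0 i hi) (hx1 i hi))

end OrderedRing

theorem geom_sum_one_sub_eq_div {K : Type*} [Field K] {s : K} (hs : s ≠ 0) (k : ℕ) :
    ∑ i ∈ range k, (1 - s) ^ i = (1 - (1 - s) ^ k) / s := by
  rw [eq_div_iff hs, ← geom_sum_mul_neg, sub_sub_cancel]

theorem stmt14_general (n : ℕ) (α : Fin n → ℕ)
    (s : Fin n → ℝ) (hs : ∀ j, 0 ≤ s j ∧ s j < 1)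
    (γ : Fin n → ℝ)
    (hγpos : ∀ j, 0 < s j → γ j = (1 - (1 - s j) ^ α j) / s j)
    (hγzero : ∀ j, s j = 0 → γ j = (α j : ℝ)) :
    (∀ x : Fin n → ℝ, (∀ j, 0 ≤ x j) → (∀ j, x j ≤ 1 - s j) →
      1 + ∑ j, γ j * (x j - 1) ≤ ∏ j, x j ^ α j) ∧
    ∀ x ∈ Set.Icc (0 : Fin n → ℝ) 1,
      1 + ∑ j, (α j : ℝ) * (x j - 1) ≤ ∏ j, x j ^ α j := by
  have hγ : ∀ j, γ j = ∑ i ∈ range (α j), (1 - s j) ^ i := by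
    intro j
    rcases (hs j).1.eq_or_lt with h | h
    · simp [hγzero j h.symm, ← h]
    · rw [hγpos j h, geom_sum_one_sub_eq_div h.ne']
  refine ⟨fun x hx0 hxs ↦ ?_, fun x ⟨hx0, hx1⟩ ↦ ?_⟩
  · simp_rw [hγ]
    exact one_add_sum_geom_sum_mul_sub_one_le_prod_pow univ α (fun j _ ↦ hx0 j)
      (fun j _ ↦ hxs j) (fun j _ ↦ (hxs j).trans (sub_le_self 1 (hs j).1))
  · simpa using one_add_sum_geom_sum_mul_sub_one_le_prod_pow (c := 1) univ α
      (fun j _ ↦ hx0 j) (fun j _ ↦ hx1 j) (fun j _ ↦ hx1 j)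

/-- The linear function `1 + Σ γ_j (x_j − 1)` underestimates the monomial on the truncated
box; in particular the gradient inequality at `1` holds over `[0,1]^n`. -/
theorem stmt14 (n : ℕ) (hn : 1 ≤ n) (α : Fin n → ℕ) (hα : ∀ j, 1 ≤ α j)
    (s : Fin n → ℝ) (hs : ∀ j, 0 ≤ s j ∧ s j < 1)
    (γ : Fin n → ℝ)
    (hγpos : ∀ j, 0 < s j → γ j = (1 - (1 - s j) ^ α j) / s j)
    (hγzero : ∀ j, s j = 0 → γ j = (α j : ℝ)) :
    (∀ x : Fin n → ℝ, (∀ j, 0 ≤ x j) → (∀ j, x j ≤ 1 - s j) →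
      1 + ∑ j, γ j * (x j - 1) ≤ ∏ j, x j ^ α j) ∧
    ∀ x ∈ Set.Icc (0 : Fin n → ℝ) 1,
      1 + ∑ j, (α j : ℝ) * (x j - 1) ≤ ∏ j, x j ^ α j :=
  stmt14_general n α s hs γ hγpos hγzero
end

section
/- Let γ ∈ ℝ^n satisfy 1 ≤ γ_j ≤ α_j for all j, and set d_γ = Σ_{j=1}^n γ_j. Then for every x ∈ [0,1]^n, ∏_{j=1}^n x_j^{α_j} − max{ 0, 1 + Σ_{j=1}^n γ_j (x_j − 1) } ≤ (1 − 1/d_γ)^{d_γ} ≤ (1 − 1/d)^d. -/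
/-!
Write `A = (∑ γⱼ xⱼ) / d_γ`. Since `xⱼ ≤ 1` and `γⱼ ≤ αⱼ`, the monomial is at most `∏ xⱼ ^ γⱼ`,
which weighted AM–GM bounds by `A ^ d_γ`; and the affine function equals `1 + d_γ (A - 1)`.
This reduces the first inequality to one variable: `A ^ p - max 0 (1 + p (A - 1)) ≤ (1 - 1/p) ^ p`
on `[0, 1]`, which holds below the kink `1 - 1/p` by monotonicity and above it because `t ↦ t ^ p`
has slope at most `p` on `[0, 1]`. The second inequality is the monotonicity of
`t ↦ (1 - 1/t) ^ t` on `[1, ∞)`, a consequence of Bernoulli's inequality.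
-/

open Finset

namespace Real

lemma rpow_sub_rpow_le_mul_sub_s15 {p a b : ℝ} (hp : 1 ≤ p) (hb : 0 ≤ b) (hba : b ≤ a)
    (ha : a ≤ 1) : a ^ p - b ^ p ≤ p * (a - b) := by
  rcases (hb.trans hba).eq_or_lt with ha0 | ha0
  · obtain rfl : b = 0 := le_antisymm (hba.trans ha0.ge) hb
    rw [← ha0, zero_rpow (by linarith)]
    simp
  -- Bernoulli: `b ^ p = a ^ p (b / a) ^ p ≥ a ^ p + p a ^ (p - 1) (b - a)`, and `a ^ (p - 1) ≤ 1`.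
  have hbern : a ^ p + p * a ^ (p - 1) * (b - a) ≤ b ^ p := by
    have h := one_add_mul_self_le_rpow_one_add (s := b / a - 1)
      (by linarith [div_nonneg hb ha0.le]) hp
    rw [add_sub_cancel, div_rpow hb ha0.le, le_div_iff₀ (rpow_pos_of_pos ha0 p)] at h
    calc a ^ p + p * a ^ (p - 1) * (b - a) = (1 + p * (b / a - 1)) * a ^ p := by
          rw [rpow_sub ha0, rpow_one]
          field_simp
      _ ≤ b ^ p := h
  have hpow : a ^ (p - 1) ≤ 1 := rpow_le_one ha0.le ha (by linarith)
  nlinarith [mul_le_of_le_one_left (mul_nonneg (by linarith : 0 ≤ p) (sub_nonneg.2 hba)) hpow]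

lemma rpow_sub_max_zero_one_add_mul_sub_one_le {p a : ℝ} (hp : 1 ≤ p) (ha0 : 0 ≤ a)
    (ha1 : a ≤ 1) : a ^ p - max 0 (1 + p * (a - 1)) ≤ (1 - 1 / p) ^ p := by
  have hp0 : 0 < p := by linarith
  have hc0 : 0 ≤ 1 - 1 / p := by
    rw [sub_nonneg, div_le_one hp0]
    exact hp
  rcases le_total a (1 - 1 / p) with hac | hca
  · linarith [le_max_left 0 (1 + p * (a - 1)), rpow_le_rpow ha0 hac hp0.le]
  · have hkink : 1 + p * (a - 1) = p * (a - (1 - 1 / p)) := by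
      field_simp
      ring
    linarith [le_max_right 0 (1 + p * (a - 1)), rpow_sub_rpow_le_mul_sub_s15 hp hc0 hca ha1]

lemma monotoneOn_one_sub_one_div_rpow_self :
    MonotoneOn (fun t : ℝ => (1 - 1 / t) ^ t) (Set.Ici 1) := by
  intro s (hs : 1 ≤ s) t (ht : 1 ≤ t) hst
  have hs0 : 0 < s := by linarith
  have ht0 : 0 < t := by linarith
  have hinv : 1 / t ≤ 1 := (div_le_one ht0).2 ht
  -- Bernoulli with exponent `t / s ≥ 1`: `(1 - 1/t) ^ (t/s) ≥ 1 - (t/s)(1/t) = 1 - 1/s`.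
  have hbern := one_add_mul_self_le_rpow_one_add (s := -(1 / t)) (by linarith)
    ((one_le_div hs0).2 hst)
  have hlhs : 1 + t / s * -(1 / t) = 1 - 1 / s := by
    field_simp
    ring
  rw [hlhs, ← sub_eq_add_neg] at hbern
  calc (1 - 1 / s) ^ s ≤ ((1 - 1 / t) ^ (t / s)) ^ s :=
        rpow_le_rpow (by rw [sub_nonneg, div_le_one hs0]; exact hs) hbern hs0.le
    _ = (1 - 1 / t) ^ t := by rw [← rpow_mul (by linarith), div_mul_cancel₀ _ hs0.ne']

lemma prod_rpow_le_weighted_mean_rpow {ι : Type*} (s : Finset ι) (w z : ι → ℝ)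
    (hw : ∀ i ∈ s, 0 ≤ w i) (hw' : 0 < ∑ i ∈ s, w i) (hz : ∀ i ∈ s, 0 ≤ z i) :
    ∏ i ∈ s, z i ^ w i ≤ ((∑ i ∈ s, w i * z i) / ∑ i ∈ s, w i) ^ ∑ i ∈ s, w i :=
  (rpow_inv_le_iff_of_pos (prod_nonneg fun i hi => rpow_nonneg (hz i hi) _)
      (div_nonneg (sum_nonneg fun i hi => mul_nonneg (hw i hi) (hz i hi)) hw'.le) hw').1
    (geom_mean_le_arith_mean s w z hw hw' hz)

lemma prod_pow_le_prod_rpow_of_le {ι : Type*} (s : Finset ι) (x γ : ι → ℝ) (k : ι → ℕ)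
    (hx0 : ∀ i ∈ s, 0 ≤ x i) (hx1 : ∀ i ∈ s, x i ≤ 1) (hγ0 : ∀ i ∈ s, 0 ≤ γ i)
    (hγk : ∀ i ∈ s, γ i ≤ k i) :
    ∏ i ∈ s, x i ^ k i ≤ ∏ i ∈ s, x i ^ γ i :=
  prod_le_prod (fun i hi => pow_nonneg (hx0 i hi) _) fun i hi => by
    rw [← rpow_natCast]
    exact rpow_le_rpow_of_exponent_ge' (hx0 i hi) (hx1 i hi) (hγ0 i hi) (hγk i hi)

end Real

open Real in
theorem stmt15_general (n : ℕ) (hn : 1 ≤ n) (α : Fin n → ℕ)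
    (d : ℕ) (hd : d = ∑ j, α j)
    (γ : Fin n → ℝ) (hγ : ∀ j, 1 ≤ γ j ∧ γ j ≤ (α j : ℝ))
    (dγ : ℝ) (hdγ : dγ = ∑ j, γ j) :
    (∀ x ∈ Set.Icc (0 : Fin n → ℝ) 1,
      (∏ j, x j ^ α j) - max 0 (1 + ∑ j, γ j * (x j - 1)) ≤ (1 - 1 / dγ) ^ dγ) ∧
    (1 - 1 / dγ) ^ dγ ≤ (1 - 1 / (d : ℝ)) ^ d := by
  have hγ0 : ∀ j ∈ univ, 0 ≤ γ j := fun j _ => zero_le_one.trans (hγ j).1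
  have hdγ1 : 1 ≤ dγ := by
    calc (1 : ℝ) ≤ ∑ _j : Fin n, 1 := by simpa using hn
      _ ≤ dγ := hdγ ▸ sum_le_sum fun j _ => (hγ j).1
  refine ⟨fun x ⟨hx0, hx1⟩ => ?_, ?_⟩
  · set A := (∑ j, γ j * x j) / dγ
    have hmean : ∏ j, x j ^ α j ≤ A ^ dγ := by
      have hγx := prod_pow_le_prod_rpow_of_le univ x γ α (fun j _ => hx0 j) (fun j _ => hx1 j)
        hγ0 fun j _ => (hγ j).2
      have hamgm := prod_rpow_le_weighted_mean_rpow univ γ x hγ0 (by linarith) fun j _ => hx0 j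
      rw [← hdγ] at hamgm
      exact hγx.trans hamgm
    have hA0 : 0 ≤ A :=
      div_nonneg (sum_nonneg fun j hj => mul_nonneg (hγ0 j hj) (hx0 j)) (by linarith)
    have hA1 : A ≤ 1 := by
      rw [div_le_one (by linarith), hdγ]
      exact sum_le_sum fun j hj => mul_le_of_le_one_right (hγ0 j hj) (hx1 j)
    have haffine : ∑ j, γ j * (x j - 1) = dγ * (A - 1) := by
      rw [mul_sub, mul_div_cancel₀ _ (by linarith), mul_one, hdγ, ← sum_sub_distrib]
      simp only [mul_sub, mul_one]
    rw [haffine]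
    linarith [rpow_sub_max_zero_one_add_mul_sub_one_le hdγ1 hA0 hA1]
  · rw [← rpow_natCast]
    refine monotoneOn_one_sub_one_div_rpow_self hdγ1 (hdγ1.trans ?_) ?_ <;>
    · rw [hdγ, hd, Nat.cast_sum]
      exact sum_le_sum fun j _ => (hγ j).2

/-- Degree-dependent error bound for the piecewise-linear convex underestimator. -/
theorem stmt15 (n : ℕ) (hn : 1 ≤ n) (α : Fin n → ℕ) (hα : ∀ j, 1 ≤ α j)
    (d : ℕ) (hd : d = ∑ j, α j)
    (γ : Fin n → ℝ) (hγ : ∀ j, 1 ≤ γ j ∧ γ j ≤ (α j : ℝ))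
    (dγ : ℝ) (hdγ : dγ = ∑ j, γ j) :
    (∀ x ∈ Set.Icc (0 : Fin n → ℝ) 1,
      (∏ j, x j ^ α j) - max 0 (1 + ∑ j, γ j * (x j - 1)) ≤ (1 - 1 / dγ) ^ dγ) ∧
    (1 - 1 / dγ) ^ dγ ≤ (1 - 1 / (d : ℝ)) ^ d :=
  stmt15_general n hn α d hd γ hγ dγ hdγ
end

section
/- Let λ₁ ≥ 2 be an integer and λ₂ ≥ 1 a real number, and consider φ(σ) = (1 − σ)^{λ₁} + λ₂σ − 1. (i) If λ₂ ≥ λ₁ then φ(σ) > 0 for all σ ∈ (0,1]. (ii) If λ₂ < λ₁ then φ has exactly one root σ* in (0,1]; this root satisfies σ* > 1 − (λ₂/λ₁)^{1/(λ₁−1)}; and φ(σ) < 0 for all σ ∈ (0, σ*) while φ(σ) > 0 for all σ ∈ (σ*, 1]. -/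
/-- Root structure of the univariate polynomial `φ(σ) = (1−σ)^{λ₁} + λ₂σ − 1`. -/
theorem stmt18 (l1 : ℕ) (hl1 : 2 ≤ l1) (l2 : ℝ) (hl2 : 1 ≤ l2)
    (φ : ℝ → ℝ) (hφ : ∀ σ : ℝ, φ σ = (1 - σ) ^ l1 + l2 * σ - 1) :
    ((l1 : ℝ) ≤ l2 → ∀ σ ∈ Set.Ioc (0 : ℝ) 1, 0 < φ σ) ∧
    (l2 < (l1 : ℝ) → ∃ σs ∈ Set.Ioc (0 : ℝ) 1, φ σs = 0 ∧
      (∀ σ ∈ Set.Ioc (0 : ℝ) 1, φ σ = 0 → σ = σs) ∧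
      1 - (l2 / (l1 : ℝ)) ^ ((1 : ℝ) / ((l1 : ℝ) - 1)) < σs ∧
      (∀ σ : ℝ, 0 < σ → σ < σs → φ σ < 0) ∧
      (∀ σ : ℝ, σs < σ → σ ≤ 1 → 0 < φ σ)) := by
  set ψ : ℝ → ℝ := fun σ => l2 - ∑ k ∈ Finset.range l1, (1 - σ) ^ k with hψ
  have hfac : ∀ σ : ℝ, φ σ = σ * ψ σ := by
    intro σ
    rw [hφ, hψ]
    simp only
    linear_combination (-1 : ℝ) * geom_sum_mul (1 - σ) l1
  have hmono : ∀ a b : ℝ, a < b → b ≤ 1 → ψ a < ψ b := by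
    intro a b hab hb1
    have hsum : ∑ k ∈ Finset.range l1, (1 - b) ^ k < ∑ k ∈ Finset.range l1, (1 - a) ^ k := by
      refine Finset.sum_lt_sum (fun i _ => pow_le_pow_left₀ (by linarith) (by linarith) i) ?_
      refine ⟨1, Finset.mem_range.2 (by omega), ?_⟩
      simpa using (by linarith : 1 - b < 1 - a)
    simp only [hψ]
    linarith
  have hψ1 : ψ 1 = l2 - 1 := by
    have : ∑ k ∈ Finset.range l1, ((1 : ℝ) - 1) ^ k = 1 := by
      rw [show ((1:ℝ) - 1) = 0 by ring, geom_sum_eq (by norm_num),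
        zero_pow (by omega : l1 ≠ 0)]
      norm_num
    simp only [hψ, this]
  have hψ0 : ψ 0 = l2 - l1 := by
    simp [hψ]
  constructor
  · -- part (i)
    intro hle σ hσ
    obtain ⟨hσ0, hσ1⟩ := hσ
    have hsum : ∑ k ∈ Finset.range l1, (1 - σ) ^ k < ∑ k ∈ Finset.range l1, (1 : ℝ) := by
      refine Finset.sum_lt_sum (fun i _ => pow_le_one₀ (by linarith) (by linarith)) ?_
      exact ⟨1, Finset.mem_range.2 (by omega), by simpa using (by linarith : 1 - σ < 1)⟩
    rw [Finset.sum_const, Finset.card_range, nsmul_eq_mul, mul_one] at hsum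
    have hψpos : 0 < ψ σ := by
      simp only [hψ]; linarith
    rw [hfac]
    exact mul_pos hσ0 hψpos
  · -- part (ii)
    intro hlt
    have hcont : Continuous ψ := by
      apply continuous_const.sub
      exact continuous_finset_sum _ fun i _ => (continuous_const.sub continuous_id).pow i
    -- IVT to get a root of ψ in (0,1]
    have hψ0neg : ψ 0 < 0 := by rw [hψ0]; linarith
    have hψ1nn : 0 ≤ ψ 1 := by rw [hψ1]; linarith
    obtain ⟨σs, hσsIcc, hψσs⟩ : ∃ σs ∈ Set.Icc (0:ℝ) 1, ψ σs = 0 := by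
      have := intermediate_value_Icc (by norm_num : (0:ℝ) ≤ 1) hcont.continuousOn
      have hmem : (0:ℝ) ∈ Set.Icc (ψ 0) (ψ 1) := ⟨hψ0neg.le, hψ1nn⟩
      obtain ⟨x, hx, hx0⟩ := this hmem
      exact ⟨x, hx, hx0⟩
    have hσs0 : 0 < σs := by
      rcases lt_or_eq_of_le hσsIcc.1 with h | h
      · exact h
      · exfalso; rw [← h] at hψσs; linarith
    have hσs1 : σs ≤ 1 := hσsIcc.2
    refine ⟨σs, ⟨hσs0, hσs1⟩, by rw [hfac, hψσs, mul_zero], ?_, ?_, ?_, ?_⟩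
    · -- uniqueness
      intro σ ⟨hσ0, hσ1⟩ hroot
      rw [hfac] at hroot
      have hψσ : ψ σ = 0 := by
        rcases mul_eq_zero.1 hroot with h | h
        · exact absurd h hσ0.ne'
        · exact h
      rcases lt_trichotomy σ σs with h | h | h
      · exact absurd (hmono σ σs h hσs1) (by rw [hψσ, hψσs]; exact lt_irrefl 0)
      · exact h
      · exact absurd (hmono σs σ h hσ1) (by rw [hψσ, hψσs]; exact lt_irrefl 0)
    · -- lower bound
      set t : ℝ := 1 - σs with ht
      have ht0 : 0 ≤ t := by simp only [ht]; linarith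
      have ht1 : t < 1 := by simp only [ht]; linarith
      have hl2eq : l2 = ∑ k ∈ Finset.range l1, t ^ k := by
        have := hψσs
        simp only [hψ, ← ht] at this
        linarith
      have hsum : ∑ k ∈ Finset.range l1, t ^ (l1 - 1) < ∑ k ∈ Finset.range l1, t ^ k := by
        refine Finset.sum_lt_sum (fun i hi => pow_le_pow_of_le_one ht0 ht1.le
          (by have := Finset.mem_range.1 hi; omega)) ?_
        refine ⟨0, Finset.mem_range.2 (by omega), ?_⟩
        simpa using pow_lt_one₀ ht0 ht1 (by omega : l1 - 1 ≠ 0)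
      rw [Finset.sum_const, Finset.card_range, nsmul_eq_mul] at hsum
      have hl1pos : (0:ℝ) < l1 := by positivity
      have hkey : t ^ (l1 - 1) < l2 / l1 := by
        rw [lt_div_iff₀ hl1pos, mul_comm]
        linarith [hl2eq ▸ hsum]
      have hcast : ((l1 - 1 : ℕ) : ℝ) = (l1 : ℝ) - 1 := by
        have : (1:ℕ) ≤ l1 := by omega
        push_cast [Nat.cast_sub this]
        ring
      have hl1m1 : (0:ℝ) < (l1:ℝ) - 1 := by
        have : (2:ℝ) ≤ l1 := by exact_mod_cast hl1
        linarith
      have hfin : t < (l2 / l1) ^ ((1:ℝ) / ((l1:ℝ) - 1)) := by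
        have h1 : t = (t ^ (l1 - 1 : ℕ)) ^ ((1:ℝ) / ((l1:ℝ) - 1)) := by
          rw [← Real.rpow_natCast t (l1 - 1), ← Real.rpow_mul ht0, hcast,
            mul_one_div, div_self hl1m1.ne', Real.rpow_one]
        rw [h1]
        exact Real.rpow_lt_rpow (pow_nonneg ht0 _) hkey (by positivity)
      simp only [ht] at hfin
      linarith
    · -- negative before the root
      intro σ hσ0 hσσs
      have := hmono σ σs hσσs hσs1
      rw [hψσs] at this
      rw [hfac]
      exact mul_neg_of_pos_of_neg hσ0 this
    · -- positive after the root
      intro σ hσσs hσ1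
      have := hmono σs σ hσσs hσ1
      rw [hψσs] at this
      rw [hfac]
      exact mul_pos (lt_trans hσs0 hσσs) this
end

section
/- Let 0 ≤ t₁ ≤ t₂ be real numbers and let 1 denote the all-ones vector in ℝ^n. (i) If X ⊆ ℝ^n × ℝ is a convex set containing the points (t₁·1, t₁^d) and (t₂·1, t₂^d), then for every ξ ∈ [0,1], sup_{(x,w)∈X} |w − ∏_{j=1}^n x_j^{α_j}| ≥ (1−ξ)t₁^d + ξt₂^d − ((1−ξ)t₁ + ξt₂)^d. (ii) If S ⊆ ℝ^n is convex with t₁·1, t₂·1 ∈ S and g : S → ℝ is a concave function with g(x) ≥ ∏_j x_j^{α_j} for all x ∈ S, then for every ξ ∈ [0,1], sup_{x∈S} ( g(x) − ∏_j x_j^{α_j} ) ≥ (1−ξ)t₁^d + ξt₂^d − ((1−ξ)t₁ + ξt₂)^d. -/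
/-- Lower bounds on the error of any convex relaxation of the graph of a monomial, and of
any concave overestimator, coming from two points on the diagonal ray. -/
theorem stmt19 (n : ℕ) (hn : 1 ≤ n) (α : Fin n → ℕ) (hα : ∀ j, 1 ≤ α j)
    (d : ℕ) (hd : d = ∑ j, α j)
    (t₁ t₂ : ℝ) (ht₁ : 0 ≤ t₁) (ht₁₂ : t₁ ≤ t₂) :
    (∀ X : Set ((Fin n → ℝ) × ℝ), Convex ℝ X →
      (((fun _ => t₁ : Fin n → ℝ), t₁ ^ d) ∈ X) →
      (((fun _ => t₂ : Fin n → ℝ), t₂ ^ d) ∈ X) →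
      ∀ ξ ∈ Set.Icc (0 : ℝ) 1, ∃ p ∈ X,
        (1 - ξ) * t₁ ^ d + ξ * t₂ ^ d - ((1 - ξ) * t₁ + ξ * t₂) ^ d ≤
          |p.2 - ∏ j, p.1 j ^ α j|) ∧
    (∀ S : Set (Fin n → ℝ), Convex ℝ S →
      ((fun _ => t₁ : Fin n → ℝ) ∈ S) → ((fun _ => t₂ : Fin n → ℝ) ∈ S) →
      ∀ g : (Fin n → ℝ) → ℝ, ConcaveOn ℝ S g →
      (∀ x ∈ S, (∏ j, x j ^ α j) ≤ g x) →
      ∀ ξ ∈ Set.Icc (0 : ℝ) 1, ∃ x ∈ S,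
        (1 - ξ) * t₁ ^ d + ξ * t₂ ^ d - ((1 - ξ) * t₁ + ξ * t₂) ^ d ≤
          g x - ∏ j, x j ^ α j) := by
  have hprod : ∀ s : ℝ, (∏ j : Fin n, s ^ α j) = s ^ d := by
    intro s
    rw [hd, ← Finset.prod_pow_eq_pow_sum]
  constructor
  · intro X hX h1 h2 ξ hξ
    refine ⟨(1 - ξ) • ((fun _ => t₁ : Fin n → ℝ), t₁ ^ d) +
      ξ • ((fun _ => t₂ : Fin n → ℝ), t₂ ^ d),
      hX h1 h2 (by linarith [hξ.2]) hξ.1 (by ring), ?_⟩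
    have heq : ((1 - ξ) • ((fun _ => t₁ : Fin n → ℝ), t₁ ^ d) +
        ξ • ((fun _ => t₂ : Fin n → ℝ), t₂ ^ d)) =
        ((fun _ => (1 - ξ) * t₁ + ξ * t₂ : Fin n → ℝ),
          (1 - ξ) * t₁ ^ d + ξ * t₂ ^ d) := by
      ext <;> simp
    rw [heq]
    simp only [hprod]
    exact le_abs_self _
  · intro S hS h1 h2 g hg hge ξ hξ
    have ha : (0:ℝ) ≤ 1 - ξ := by linarith [hξ.2]
    have heq : ((1 - ξ) • (fun _ => t₁ : Fin n → ℝ) + ξ • (fun _ => t₂ : Fin n → ℝ)) =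
        (fun _ => (1 - ξ) * t₁ + ξ * t₂ : Fin n → ℝ) := by
      ext j; simp
    have hmem : (fun _ => (1 - ξ) * t₁ + ξ * t₂ : Fin n → ℝ) ∈ S := by
      have := hS h1 h2 ha hξ.1 (by ring)
      rwa [heq] at this
    refine ⟨_, hmem, ?_⟩
    have hcc := hg.2 h1 h2 ha hξ.1 (by ring)
    rw [heq] at hcc
    have hg1 := hge _ h1
    have hg2 := hge _ h2
    simp only [hprod] at hg1 hg2 ⊢
    have m1 := mul_le_mul_of_nonneg_left hg1 ha
    have m2 := mul_le_mul_of_nonneg_left hg2 hξ.1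
    have hle : (1 - ξ) * t₁ ^ d + ξ * t₂ ^ d ≤
        g (fun _ => (1 - ξ) * t₁ + ξ * t₂) := by
      calc (1 - ξ) * t₁ ^ d + ξ * t₂ ^ d
          ≤ (1 - ξ) * g (fun _ => t₁) + ξ * g (fun _ => t₂) := by linarith
        _ ≤ _ := by simpa [smul_eq_mul] using hcc
    linarith
end
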